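/- arXiv:1309.1045 — 5 statements merged into one kernel-verified Lean document; each statement's English description precedes it below -/
import Mathlib

section
/- Let α ∈ (0,1) and r > 0. Then G_α(z) tends to G_α(-r^+) = (2πi)^{-1} ∫_0^∞ (exp(r^{1-α} y^α) - exp(e^{-2iπα} r^{1-α} y^α)) r^{-1} e^{-y} dy as z → -r within the open upper half-plane {z ∈ ℂ : Im z > 0}. -/
open MeasureTheory Complex Set Filter

/-- The function `G_α` from Fourati's paper: for `z` in the slit plane,
`G_α(z) = (2πi)⁻¹ ∫_0^∞ (exp(-e^{-iπα} y^α z^{1-α}) - exp(-e^{iπα} y^α z^{1-α})) z⁻¹ e^{-y} dy`,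
all complex powers being principal branches. -/
noncomputable def Galpha (α : ℝ) (z : ℂ) : ℂ :=
  (2 * Real.pi * Complex.I)⁻¹ *
    ∫ y in Set.Ioi (0:ℝ),
      ((Complex.exp (-(Complex.exp (-(Real.pi * α : ℂ) * Complex.I)) * (y:ℂ) ^ (α:ℂ) * z ^ (1 - (α:ℂ))) -
        Complex.exp (-(Complex.exp ((Real.pi * α : ℂ) * Complex.I)) * (y:ℂ) ^ (α:ℂ) * z ^ (1 - (α:ℂ)))) / z) *
      Complex.exp (-(y:ℂ))

/-- The upper boundary value `G_α(-r^+)`. -/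
noncomputable def GalphaPlus (α r : ℝ) : ℂ :=
  (2 * Real.pi * Complex.I)⁻¹ *
    ∫ y in Set.Ioi (0:ℝ),
      ((Complex.exp ((r:ℂ) ^ (1 - (α:ℂ)) * (y:ℂ) ^ (α:ℂ)) -
        Complex.exp (Complex.exp (-(2 * Real.pi * α : ℂ) * Complex.I) * (r:ℂ) ^ (1 - (α:ℂ)) * (y:ℂ) ^ (α:ℂ))) / (r:ℂ)) *
      Complex.exp (-(y:ℂ))

/-- `θ_α(r) = -arg(G_α(-r^+))/π`. -/
noncomputable def thetaFun (α r : ℝ) : ℝ := -(GalphaPlus α r).arg / Real.pi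

/-- Zolotarev's integral formula for the density of the strictly `α`-stable
distribution with positivity parameter `ρ` (the integral is a real number; we take
the real part). -/
noncomputable def stableDensity (α ρ x : ℝ) : ℝ :=
  ((2 * Real.pi * Complex.I)⁻¹ *
    ∫ y in Set.Ioi (0:ℝ),
      ((Complex.exp (-(Complex.exp (-(Real.pi * ρ * α : ℂ) * Complex.I)) * (y:ℂ) ^ (α:ℂ) * (x:ℂ) ^ (-(α:ℂ))) -
        Complex.exp (-(Complex.exp ((Real.pi * ρ * α : ℂ) * Complex.I)) * (y:ℂ) ^ (α:ℂ) * (x:ℂ) ^ (-(α:ℂ)))) / (x:ℂ)) *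
      Complex.exp (-(y:ℂ))).re

/-- A function is completely monotone (on `(0,∞)`) if it is infinitely differentiable
there and `(-1)^n f^{(n)}(x) ≥ 0` for all `n` and `x > 0`. -/
def CompletelyMonotone (φ : ℝ → ℝ) : Prop :=
  ContDiffOn ℝ (⊤ : ℕ∞) φ (Set.Ioi 0) ∧
  ∀ (n : ℕ) (x : ℝ), 0 < x → 0 ≤ (-1 : ℝ) ^ n * iteratedDeriv n φ x

/-- A function `H` on `(0,∞)` is hyperbolically completely monotone if for every `u > 0`
the function `v ↦ H(uv)H(u/v)` is a completely monotone function of `v + 1/v`. -/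
def HCM (H : ℝ → ℝ) : Prop :=
  ∀ u : ℝ, 0 < u → ∃ φ : ℝ → ℝ, CompletelyMonotone φ ∧
    ∀ v : ℝ, 0 < v → H (u * v) * H (u / v) = φ (v + 1 / v)



noncomputable def Gint (α : ℝ) (z : ℂ) (y : ℝ) : ℂ :=
  ((Complex.exp (-(Complex.exp (-(Real.pi * α : ℂ) * Complex.I)) * (y:ℂ) ^ (α:ℂ) * z ^ (1 - (α:ℂ))) -
    Complex.exp (-(Complex.exp ((Real.pi * α : ℂ) * Complex.I)) * (y:ℂ) ^ (α:ℂ) * z ^ (1 - (α:ℂ)))) / z) *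
  Complex.exp (-(y:ℂ))

lemma log_neg_ofReal {r : ℝ} (hr : 0 < r) :
    Complex.log (-(r:ℂ)) = (Real.log r : ℂ) + Real.pi * Complex.I := by
  have h1 : (-(r:ℂ)) = ((-r : ℝ) : ℂ) := by push_cast; ring
  rw [h1, Complex.log]
  have harg : Complex.arg ((-r : ℝ) : ℂ) = Real.pi := Complex.arg_ofReal_of_neg (by linarith)
  have habs : ‖((-r : ℝ) : ℂ)‖ = r := by
    rw [Complex.norm_real, Real.norm_eq_abs, abs_of_neg (by linarith : -r < 0)]; ring
  rw [harg, habs]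

lemma neg_ofReal_cpow {r : ℝ} (hr : 0 < r) (w : ℂ) :
    (-(r:ℂ)) ^ w = (r:ℂ) ^ w * Complex.exp (Real.pi * Complex.I * w) := by
  have h1 : (-(r:ℂ)) ≠ 0 := by
    simp only [ne_eq, neg_eq_zero, Complex.ofReal_eq_zero]; exact hr.ne'
  have h2 : (r:ℂ) ≠ 0 := Complex.ofReal_ne_zero.2 hr.ne'
  rw [Complex.cpow_def_of_ne_zero h1, Complex.cpow_def_of_ne_zero h2, ← Complex.exp_add,
    ← add_mul, log_neg_ofReal hr, ← Complex.ofReal_log hr.le]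


lemma neg_exp_mul_exp {a b c : ℂ} (h : a + b = c + Real.pi * Complex.I) :
    (-(Complex.exp a)) * Complex.exp b = Complex.exp c := by
  have : Complex.exp a * Complex.exp b = Complex.exp c * Complex.exp (Real.pi * Complex.I) := by
    rw [← Complex.exp_add, ← Complex.exp_add, h]
  rw [Complex.exp_pi_mul_I] at this
  rw [neg_mul, this]; ring

lemma limit_eq {α r : ℝ} (hr : 0 < r) (y : ℝ) :
    ((Complex.exp ((r:ℂ) ^ (1 - (α:ℂ)) * (y:ℂ) ^ (α:ℂ)) -
      Complex.exp (Complex.exp (-(2 * Real.pi * α : ℂ) * Complex.I) * (r:ℂ) ^ (1 - (α:ℂ)) * (y:ℂ) ^ (α:ℂ))) / (r:ℂ)) *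
      Complex.exp (-(y:ℂ)) = Gint α (-(r:ℂ)) y := by
  have h1 : -(Complex.exp (-(Real.pi * α : ℂ) * Complex.I)) * (-(r:ℂ)) ^ (1 - (α:ℂ)) =
      Complex.exp (-(2 * Real.pi * α : ℂ) * Complex.I) * (r:ℂ) ^ (1 - (α:ℂ)) := by
    rw [neg_ofReal_cpow hr, ← mul_assoc, mul_right_comm,
      neg_exp_mul_exp (c := -(2 * Real.pi * α : ℂ) * Complex.I) (by push_cast; ring), mul_comm]
  have h2 : -(Complex.exp ((Real.pi * α : ℂ) * Complex.I)) * (-(r:ℂ)) ^ (1 - (α:ℂ)) =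
      (r:ℂ) ^ (1 - (α:ℂ)) := by
    rw [neg_ofReal_cpow hr, ← mul_assoc, mul_right_comm,
      neg_exp_mul_exp (c := (0:ℂ)) (by push_cast; ring), Complex.exp_zero, one_mul]
  unfold Gint
  rw [show (-(Complex.exp (-(Real.pi * α : ℂ) * Complex.I)) * (y:ℂ) ^ (α:ℂ) * (-(r:ℂ)) ^ (1 - (α:ℂ)))
      = Complex.exp (-(2 * Real.pi * α : ℂ) * Complex.I) * (r:ℂ) ^ (1 - (α:ℂ)) * (y:ℂ) ^ (α:ℂ) from by
        rw [mul_right_comm, h1],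
    show (-(Complex.exp ((Real.pi * α : ℂ) * Complex.I)) * (y:ℂ) ^ (α:ℂ) * (-(r:ℂ)) ^ (1 - (α:ℂ)))
      = (r:ℂ) ^ (1 - (α:ℂ)) * (y:ℂ) ^ (α:ℂ) from by rw [mul_right_comm, h2],
    div_neg, ← neg_div, neg_sub]

lemma cpow_tendsto {r : ℝ} (hr : 0 < r) (w : ℂ) :
    Filter.Tendsto (fun z : ℂ => z ^ w) (nhdsWithin (-(r:ℂ)) {z : ℂ | 0 < z.im})
      (nhds ((-(r:ℂ)) ^ w)) := by
  have hne : (-(r:ℂ)) ≠ 0 := by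
    simp only [ne_eq, neg_eq_zero, Complex.ofReal_eq_zero]; exact hr.ne'
  have hsub : {z : ℂ | 0 < z.im} ⊆ {z : ℂ | 0 ≤ z.im} := fun z hz => mem_setOf.2 (le_of_lt (mem_setOf.1 hz))
  have hlog : Filter.Tendsto Complex.log (nhdsWithin (-(r:ℂ)) {z : ℂ | 0 < z.im})
      (nhds (Complex.log (-(r:ℂ)))) :=
    ((Complex.continuousWithinAt_log_of_re_neg_of_im_zero (by simpa using hr) (by simp)).mono
      hsub).tendsto
  have h1 : Filter.Tendsto (fun z : ℂ => Complex.exp (Complex.log z * w))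
      (nhdsWithin (-(r:ℂ)) {z : ℂ | 0 < z.im})
      (nhds (Complex.exp (Complex.log (-(r:ℂ)) * w))) := (hlog.mul tendsto_const_nhds).cexp
  rw [Complex.cpow_def_of_ne_zero hne]
  refine h1.congr' ?_
  filter_upwards [self_mem_nhdsWithin] with z hz
  have hz0 : z ≠ 0 := by
    intro h; rw [h] at hz; simp at hz
  exact (Complex.cpow_def_of_ne_zero hz0 w).symm

lemma gint_tendsto {α r : ℝ} (hr : 0 < r) (y : ℝ) :
    Filter.Tendsto (fun z : ℂ => Gint α z y) (nhdsWithin (-(r:ℂ)) {z : ℂ | 0 < z.im})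
      (nhds (Gint α (-(r:ℂ)) y)) := by
  have hne : (-(r:ℂ)) ≠ 0 := by
    simp only [ne_eq, neg_eq_zero, Complex.ofReal_eq_zero]; exact hr.ne'
  have hz : Filter.Tendsto (fun z : ℂ => z) (nhdsWithin (-(r:ℂ)) {z : ℂ | 0 < z.im})
      (nhds (-(r:ℂ))) := Filter.tendsto_id.mono_left nhdsWithin_le_nhds
  have hc := cpow_tendsto hr (1 - (α:ℂ))
  have t1 := (hc.const_mul (-(Complex.exp (-(Real.pi * α : ℂ) * Complex.I)) * (y:ℂ) ^ (α:ℂ))).cexp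
  have t2 := (hc.const_mul (-(Complex.exp ((Real.pi * α : ℂ) * Complex.I)) * (y:ℂ) ^ (α:ℂ))).cexp
  exact (((t1.sub t2).div hz hne).mul_const (Complex.exp (-(y:ℂ))))

lemma gint_meas {α : ℝ} (hα : α ∈ Set.Ioo (0:ℝ) 1) {z : ℂ} (hz : z ≠ 0) :
    AEStronglyMeasurable (fun y => Gint α z y) (volume.restrict (Set.Ioi (0:ℝ))) := by
  apply ContinuousOn.aestronglyMeasurable _ measurableSet_Ioi
  intro y hy
  have hy0 : (0:ℝ) < y := hy
  have hpow : ContinuousAt (fun t : ℝ => ((t:ℂ)) ^ (α:ℂ)) y := by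
    apply (continuousAt_cpow_const _).comp Complex.continuous_ofReal.continuousAt
    exact Complex.mem_slitPlane_iff.2 (Or.inl (by simpa using hy0))
  have h1 : ContinuousAt (fun t : ℝ => Gint α z t) y := by
    unfold Gint
    apply ContinuousAt.mul
    · apply ContinuousAt.div_const
      apply ContinuousAt.sub
      · exact ((continuousAt_const.mul hpow).mul continuousAt_const).cexp
      · exact ((continuousAt_const.mul hpow).mul continuousAt_const).cexp
    · exact (Complex.continuous_ofReal.continuousAt.neg).cexp
  exact h1.continuousWithinAt

lemma gint_bound {α r : ℝ} (hα : α ∈ Set.Ioo (0:ℝ) 1) (hr : 0 < r) {z : ℂ}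
    (hz1 : r / 2 ≤ ‖z‖) (hz2 : ‖z‖ ≤ 2 * r) {y : ℝ} (hy : 0 < y) :
    ‖Gint α z y‖ ≤ 4 / r * Real.exp ((2 * r) ^ (1 - α) * y ^ α - y) := by
  obtain ⟨hα0, hα1⟩ := hα
  have habs_pow : ∀ θ : ℝ, ‖-(Complex.exp ((θ:ℂ) * Complex.I))‖ = 1 := by
    intro θ
    rw [norm_neg, Complex.norm_exp]
    simp
  have hya : ‖(y:ℂ) ^ (α:ℂ)‖ = y ^ α := by
    rw [Complex.norm_cpow_eq_rpow_re_of_pos hy]; simp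
  have hzw : ‖z ^ (1 - (α:ℂ))‖ ≤ (2 * r) ^ (1 - α) := by
    refine le_trans (Complex.norm_cpow_le z (1 - (α:ℂ))) ?_
    have him : (1 - (α:ℂ)).im = 0 := by simp
    have hre : (1 - (α:ℂ)).re = 1 - α := by simp
    rw [him, hre, mul_zero, Real.exp_zero, div_one]
    exact Real.rpow_le_rpow (norm_nonneg z) hz2 (by linarith)
  have hexp : ∀ c : ℂ, ‖c‖ = 1 →
      ‖Complex.exp (c * (y:ℂ) ^ (α:ℂ) * z ^ (1 - (α:ℂ)))‖ ≤
        Real.exp ((2 * r) ^ (1 - α) * y ^ α) := by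
    intro c hc
    rw [Complex.norm_exp]
    apply Real.exp_le_exp.2
    refine le_trans (Complex.re_le_norm _) ?_
    rw [norm_mul, norm_mul, hc, one_mul, hya]
    calc y ^ α * ‖z ^ (1 - (α:ℂ))‖ ≤ y ^ α * (2 * r) ^ (1 - α) :=
          mul_le_mul_of_nonneg_left hzw (Real.rpow_nonneg hy.le α)
      _ = (2 * r) ^ (1 - α) * y ^ α := mul_comm _ _
  unfold Gint
  rw [norm_mul, norm_div]
  have hexp_y : ‖Complex.exp (-(y:ℂ))‖ = Real.exp (-y) := by
    rw [Complex.norm_exp]; simp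
  rw [hexp_y]
  have hnum : ‖Complex.exp (-(Complex.exp (-(Real.pi * α : ℂ) * Complex.I)) * (y:ℂ) ^ (α:ℂ) * z ^ (1 - (α:ℂ))) -
      Complex.exp (-(Complex.exp ((Real.pi * α : ℂ) * Complex.I)) * (y:ℂ) ^ (α:ℂ) * z ^ (1 - (α:ℂ)))‖ ≤
      2 * Real.exp ((2 * r) ^ (1 - α) * y ^ α) := by
    refine le_trans (norm_sub_le _ _) ?_
    have e1 := hexp (-(Complex.exp (-(Real.pi * α : ℂ) * Complex.I))) (by
      have : -(Real.pi * α : ℂ) * Complex.I = ((-(Real.pi * α) : ℝ) : ℂ) * Complex.I := by push_cast; ring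
      rw [this]; exact habs_pow _)
    have e2 := hexp (-(Complex.exp ((Real.pi * α : ℂ) * Complex.I))) (by
      have : (Real.pi * α : ℂ) * Complex.I = (((Real.pi * α) : ℝ) : ℂ) * Complex.I := by push_cast; ring
      rw [this]; exact habs_pow _)
    linarith
  rw [Real.exp_sub, div_eq_mul_inv (Real.exp _), ← mul_assoc, Real.exp_neg]
  rw [mul_le_mul_iff_of_pos_right (by positivity : (0:ℝ) < (Real.exp y)⁻¹)]
  calc ‖_ - _‖ / ‖z‖ ≤ 2 * Real.exp ((2 * r) ^ (1 - α) * y ^ α) / (r / 2) := by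
        apply div_le_div₀ (by positivity) hnum (by positivity)
        exact hz1
    _ = 4 / r * Real.exp ((2 * r) ^ (1 - α) * y ^ α) := by
        field_simp; ring

lemma bound_integrable {α r : ℝ} (hα : α ∈ Set.Ioo (0:ℝ) 1) (hr : 0 < r) :
    Integrable (fun y : ℝ => 4 / r * Real.exp ((2 * r) ^ (1 - α) * y ^ α - y))
      (volume.restrict (Set.Ioi (0:ℝ))) := by
  obtain ⟨hα0, hα1⟩ := hα
  set C := (2 * r) ^ (1 - α) with hC
  have hCpos : 0 < C := Real.rpow_pos_of_pos (by linarith) _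
  set ε := ((2 * C)⁻¹) ^ ((1 - α)⁻¹) with hε
  have hεpos : 0 < ε := Real.rpow_pos_of_pos (by positivity) _
  have hε1α : ε ^ (1 - α) = (2 * C)⁻¹ := by
    rw [hε, ← Real.rpow_mul (by positivity), inv_mul_cancel₀ (by linarith : (1:ℝ) - α ≠ 0),
      Real.rpow_one]
  have hεα : 0 < ε ^ α := Real.rpow_pos_of_pos hεpos α
  set D := C / ε ^ α with hD
  have key : ∀ y : ℝ, 0 < y → C * y ^ α ≤ y / 2 + D := by
    intro y hy
    have h1 : (ε * y) ^ α ≤ ε * y + 1 := by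
      rcases le_total (ε * y) 1 with h | h
      · have := Real.rpow_le_one (by positivity : (0:ℝ) ≤ ε * y) h hα0.le
        nlinarith [mul_pos hεpos hy]
      · calc (ε * y) ^ α ≤ (ε * y) ^ (1:ℝ) :=
              Real.rpow_le_rpow_of_exponent_le h (by linarith)
          _ = ε * y := Real.rpow_one _
          _ ≤ ε * y + 1 := by linarith
    have h2 : (ε * y) ^ α = ε ^ α * y ^ α := Real.mul_rpow hεpos.le hy.le
    have h3 : C * y ^ α ≤ C * ((ε * y + 1) / ε ^ α) := by
      apply mul_le_mul_of_nonneg_left _ hCpos.le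
      rw [le_div_iff₀ hεα]
      calc y ^ α * ε ^ α = (ε * y) ^ α := by rw [h2]; ring
        _ ≤ ε * y + 1 := h1
    have hε2 : ε / ε ^ α = (2 * C)⁻¹ := by
      have h := Real.rpow_sub hεpos 1 α
      rw [Real.rpow_one] at h
      rw [← h, hε1α]
    have h4 : C * ((ε * y + 1) / ε ^ α) = C * (ε / ε ^ α) * y + D := by
      rw [hD]; field_simp
    have h5 : C * (ε / ε ^ α) = 1 / 2 := by
      rw [hε2]; field_simp
    rw [h4, h5] at h3
    linarith
  have hg : Integrable (fun y : ℝ => (4 / r * Real.exp D) * Real.exp (-(1/2 : ℝ) * y))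
      (volume.restrict (Set.Ioi (0:ℝ))) :=
    (exp_neg_integrableOn_Ioi 0 (by norm_num : (0:ℝ) < 1/2)).const_mul _
  apply hg.mono
  · apply ContinuousOn.aestronglyMeasurable _ measurableSet_Ioi
    intro y hy
    have hy0 : (0:ℝ) < y := hy
    have hx : ContinuousAt (fun y : ℝ => Real.exp (C * y ^ α - y)) y := by
      apply Real.continuous_exp.continuousAt.comp
      exact (continuousAt_const.mul (Real.continuousAt_rpow_const y α (Or.inl hy0.ne'))).sub
        continuousAt_id
    have : ContinuousAt (fun y : ℝ => 4 / r * Real.exp (C * y ^ α - y)) y :=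
      continuousAt_const.mul hx
    exact this.continuousWithinAt
  · filter_upwards [ae_restrict_mem measurableSet_Ioi] with y hy
    have hy0 : (0:ℝ) < y := hy
    have hle : C * y ^ α - y ≤ D + -(1/2) * y := by
      have := key y hy0
      linarith
    have h1 : 4 / r * Real.exp (C * y ^ α - y) ≤ (4 / r * Real.exp D) * Real.exp (-(1/2 : ℝ) * y) := by
      rw [mul_assoc, ← Real.exp_add]
      exact mul_le_mul_of_nonneg_left (Real.exp_le_exp.2 hle) (by positivity)
    rw [Real.norm_eq_abs, Real.norm_eq_abs, abs_of_pos (by positivity), abs_of_pos (by positivity)]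
    exact h1

/-- `G_α(z) → G_α(-r^+)` as `z → -r` from the open upper half-plane. -/
theorem Galpha_boundary_limit (α r : ℝ) (hα : α ∈ Set.Ioo (0:ℝ) 1) (hr : 0 < r) :
    Filter.Tendsto (Galpha α) (nhdsWithin (-(r:ℂ)) {z : ℂ | 0 < z.im})
      (nhds (GalphaPlus α r)) := by
  have hkey : GalphaPlus α r =
      (2 * Real.pi * Complex.I)⁻¹ * ∫ y in Set.Ioi (0:ℝ), Gint α (-(r:ℂ)) y := by
    unfold GalphaPlus
    congr 1
    exact integral_congr_ae (Filter.Eventually.of_forall fun y => limit_eq hr y)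
  have hG : ∀ z : ℂ, Galpha α z =
      (2 * Real.pi * Complex.I)⁻¹ * ∫ y in Set.Ioi (0:ℝ), Gint α z y := fun z => rfl
  rw [hkey]
  have hDCT : Filter.Tendsto (fun z : ℂ => ∫ y in Set.Ioi (0:ℝ), Gint α z y)
      (nhdsWithin (-(r:ℂ)) {z : ℂ | 0 < z.im})
      (nhds (∫ y in Set.Ioi (0:ℝ), Gint α (-(r:ℂ)) y)) := by
    apply MeasureTheory.tendsto_integral_filter_of_dominated_convergence
      (bound := fun y => 4 / r * Real.exp ((2 * r) ^ (1 - α) * y ^ α - y))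
    · filter_upwards [self_mem_nhdsWithin] with z hz
      have hz0 : z ≠ 0 := by
        intro h; rw [h] at hz; simp only [Set.mem_setOf_eq, Complex.zero_im] at hz
        exact lt_irrefl 0 hz
      exact gint_meas hα hz0
    · have hmem : Metric.ball (-(r:ℂ)) (r/2) ∈ nhdsWithin (-(r:ℂ)) {z : ℂ | 0 < z.im} :=
        nhdsWithin_le_nhds (Metric.ball_mem_nhds _ (by positivity))
      filter_upwards [hmem] with z hz
      rw [Metric.mem_ball, dist_eq_norm] at hz
      have hnr : ‖(-(r:ℂ))‖ = r := by
        rw [norm_neg, Complex.norm_real, Real.norm_eq_abs, abs_of_pos hr]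
      have hz1 : r / 2 ≤ ‖z‖ := by
        have h := norm_sub_norm_le (-(r:ℂ)) z
        rw [norm_sub_rev] at h
        rw [hnr] at h
        linarith
      have hz2 : ‖z‖ ≤ 2 * r := by
        have h := norm_sub_norm_le z (-(r:ℂ))
        rw [hnr] at h
        linarith
      filter_upwards [ae_restrict_mem measurableSet_Ioi] with y hy
      exact gint_bound hα hr hz1 hz2 hy
    · exact bound_integrable hα hr
    · exact Filter.Eventually.of_forall fun y => gint_tendsto hr y
  exact hDCT.const_mul ((2 * Real.pi * Complex.I)⁻¹)
end

section
/- Let α ∈ (0,1). Then for every r > 0 one has Im(G_α(-r^+)) < 0. -/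
open MeasureTheory Complex Set Filter

private lemma rpow_linear_bound {a R : ℝ} (ha0 : 0 < a) (ha1 : a < 1) (hR : 0 < R) :
    ∃ K : ℝ, 0 ≤ K ∧ ∀ y : ℝ, 0 < y → R * y ^ a ≤ y / 2 + K := by
  set M : ℝ := max 1 ((2 * R) ^ (1 - a)⁻¹) with hM
  have hM1 : (1:ℝ) ≤ M := le_max_left _ _
  have hM0 : (0:ℝ) < M := lt_of_lt_of_le one_pos hM1
  refine ⟨R * M ^ a, by positivity, fun y hy => ?_⟩
  rcases le_total y M with h | h
  · have h1 : y ^ a ≤ M ^ a := Real.rpow_le_rpow hy.le h ha0.le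
    nlinarith
  · have h1 : y ^ a = y ^ (a - 1) * y := by
      rw [← Real.rpow_add_one (ne_of_gt hy) (a - 1)]; norm_num
    have h2 : y ^ (a - 1) ≤ M ^ (a - 1) :=
      Real.rpow_le_rpow_of_nonpos hM0 h (by linarith)
    have h2R : (0:ℝ) < 2 * R := by linarith
    have h4 : 2 * R ≤ M ^ (1 - a) := by
      have h5 : ((2 * R) ^ (1 - a)⁻¹) ^ (1 - a) ≤ M ^ (1 - a) :=
        Real.rpow_le_rpow (Real.rpow_nonneg h2R.le _) (le_max_right _ _) (by linarith)
      rwa [← Real.rpow_mul h2R.le, inv_mul_cancel₀ (by linarith : (1:ℝ) - a ≠ 0),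
        Real.rpow_one] at h5
    have h3 : M ^ (a - 1) ≤ (2 * R)⁻¹ := by
      have he : M ^ (a - 1) = (M ^ (1 - a))⁻¹ := by
        rw [show a - 1 = -(1 - a) by ring, Real.rpow_neg hM0.le]
      rw [he]
      exact inv_anti₀ h2R h4
    have h6 : R * y ^ a ≤ y / 2 := by
      have h7 : y ^ (a - 1) ≤ (2 * R)⁻¹ := h2.trans h3
      have h8 : R * (y ^ (a - 1) * y) ≤ R * ((2 * R)⁻¹ * y) := by
        have := mul_le_mul_of_nonneg_right h7 hy.le
        nlinarith
      rw [h1]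
      calc R * (y ^ (a - 1) * y) ≤ R * ((2 * R)⁻¹ * y) := h8
        _ = y / 2 := by field_simp
    nlinarith [Real.rpow_nonneg hM0.le a]

/-- `Im(G_α(-r^+)) < 0` for all `r > 0`. -/
theorem GalphaPlus_im_neg (α : ℝ) (hα : α ∈ Set.Ioo (0:ℝ) 1) :
    ∀ r : ℝ, 0 < r → (GalphaPlus α r).im < 0 := by
  obtain ⟨hα0, hα1⟩ := hα
  intro r hr
  have hπ : (0:ℝ) < Real.pi := Real.pi_pos
  have hsin : 0 < Real.sin (Real.pi * α) :=
    Real.sin_pos_of_pos_of_lt_pi (by positivity) (by nlinarith)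
  have hcos : Real.cos (2 * Real.pi * α) < 1 := by
    rw [show 2 * Real.pi * α = 2 * (Real.pi * α) by ring, Real.cos_two_mul]
    nlinarith [Real.sin_sq_add_cos_sq (Real.pi * α)]
  set R : ℝ := r ^ (1 - α) with hRdef
  have hR0 : 0 < R := Real.rpow_pos_of_pos hr _
  set c : ℝ → ℝ := fun y => R * y ^ α with hc
  set w : ℂ := Complex.exp (-(2 * Real.pi * α : ℂ) * Complex.I) with hw
  have hwre : w.re = Real.cos (2 * Real.pi * α) := by
    rw [hw, show (-(2 * Real.pi * α : ℂ) * Complex.I)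
        = ((-(2 * Real.pi * α) : ℝ) : ℂ) * Complex.I by push_cast; ring,
      Complex.exp_ofReal_mul_I_re, Real.cos_neg]
  set g : ℝ → ℂ := fun y =>
    (Complex.exp ((c y : ℝ) : ℂ) - Complex.exp (w * ((c y : ℝ) : ℂ))) *
      (((Real.exp (-y) / r : ℝ)) : ℂ) with hg
  have hEq : EqOn (fun y : ℝ =>
      ((Complex.exp ((r:ℂ) ^ (1 - (α:ℂ)) * (y:ℂ) ^ (α:ℂ)) -
        Complex.exp (Complex.exp (-(2 * Real.pi * α : ℂ) * Complex.I) *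
          (r:ℂ) ^ (1 - (α:ℂ)) * (y:ℂ) ^ (α:ℂ))) / (r:ℂ)) *
      Complex.exp (-(y:ℂ))) g (Ioi 0) := by
    intro y hy
    have hy0 : (0:ℝ) < y := hy
    have e1 : (r:ℂ) ^ (1 - (α:ℂ)) = ((R : ℝ) : ℂ) := by
      rw [show (1 - (α:ℂ)) = (((1 - α : ℝ)) : ℂ) by push_cast; ring,
        ← Complex.ofReal_cpow hr.le]
    have e2 : (y:ℂ) ^ ((α : ℂ)) = ((y ^ α : ℝ) : ℂ) := (Complex.ofReal_cpow hy0.le α).symm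
    have e3 : Complex.exp (-(y:ℂ)) = ((Real.exp (-y) : ℝ) : ℂ) := by
      rw [Complex.ofReal_exp]; norm_cast
    have hcy : ((R:ℝ):ℂ) * ((y ^ α : ℝ):ℂ) = ((c y : ℝ) : ℂ) := by
      simp only [hc]; push_cast; ring
    simp only
    rw [e1, e2, e3, ← hw, mul_assoc w, hcy]
    have hrne : (r : ℂ) ≠ 0 := Complex.ofReal_ne_zero.mpr (ne_of_gt hr)
    simp only [hg]
    push_cast
    field_simp
  have habs2 : ∀ y : ℝ, 0 < y →
      ‖Complex.exp (w * ((c y : ℝ) : ℂ))‖ = Real.exp (Real.cos (2 * Real.pi * α) * c y) := by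
    intro y hy
    rw [Complex.norm_exp]
    congr 1
    simp [Complex.mul_re, hwre]
  obtain ⟨K, hK0, hKb⟩ := rpow_linear_bound hα0 hα1 hR0
  have hnorm : ∀ y : ℝ, 0 < y → ‖g y‖ ≤ 2 / r * Real.exp K * Real.exp (-2⁻¹ * y) := by
    intro y hy
    have hcpos : 0 < c y := mul_pos hR0 (Real.rpow_pos_of_pos hy _)
    have h1 : ‖g y‖ = ‖Complex.exp ((c y : ℝ) : ℂ) - Complex.exp (w * ((c y : ℝ) : ℂ))‖
        * (Real.exp (-y) / r) := by
      simp only [hg, norm_mul, Complex.norm_real, Real.norm_eq_abs]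
      rw [abs_of_pos (div_pos (Real.exp_pos _) hr)]
    have h2 : ‖Complex.exp ((c y : ℝ) : ℂ)‖ = Real.exp (c y) := by
      rw [Complex.norm_exp]; simp
    have h3 := habs2 y hy
    have h4 : ‖Complex.exp ((c y : ℝ) : ℂ) - Complex.exp (w * ((c y : ℝ) : ℂ))‖
        ≤ 2 * Real.exp (c y) := by
      calc ‖Complex.exp ((c y : ℝ) : ℂ) - Complex.exp (w * ((c y : ℝ) : ℂ))‖
          ≤ ‖Complex.exp ((c y : ℝ) : ℂ)‖
            + ‖Complex.exp (w * ((c y : ℝ) : ℂ))‖ :=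
            by simpa using
              norm_sub_le (Complex.exp ((c y : ℝ) : ℂ)) (Complex.exp (w * ((c y : ℝ) : ℂ)))
        _ ≤ 2 * Real.exp (c y) := by
            rw [h2, h3]
            have : Real.exp (Real.cos (2 * Real.pi * α) * c y) ≤ Real.exp (c y) :=
              Real.exp_le_exp.mpr (by nlinarith [hcos.le])
            linarith
    have h5 : Real.exp (c y) ≤ Real.exp (y / 2 + K) := Real.exp_le_exp.mpr (hKb y hy)
    have h6 : Real.exp (y / 2 + K) * Real.exp (-y) = Real.exp K * Real.exp (-2⁻¹ * y) := by
      rw [← Real.exp_add, ← Real.exp_add]; congr 1; ring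
    have hexy : 0 < Real.exp (-y) := Real.exp_pos _
    calc ‖g y‖ = ‖Complex.exp ((c y : ℝ) : ℂ) - Complex.exp (w * ((c y : ℝ) : ℂ))‖
          * (Real.exp (-y) / r) := h1
      _ ≤ 2 * Real.exp (c y) * (Real.exp (-y) / r) := by
          apply mul_le_mul_of_nonneg_right h4 (by positivity)
      _ ≤ 2 * Real.exp (y / 2 + K) * (Real.exp (-y) / r) := by
          apply mul_le_mul_of_nonneg_right (by linarith) (by positivity)
      _ = 2 / r * (Real.exp (y / 2 + K) * Real.exp (-y)) := by ring
      _ = 2 / r * Real.exp K * Real.exp (-2⁻¹ * y) := by rw [h6]; ring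
  have hgcont : Continuous g := by
    have hc_cont : Continuous c := continuous_const.mul (Real.continuous_rpow_const hα0.le)
    have h1 : Continuous fun y => Complex.exp ((c y : ℝ) : ℂ) :=
      Complex.continuous_exp.comp (Complex.continuous_ofReal.comp hc_cont)
    have h2 : Continuous fun y => Complex.exp (w * ((c y : ℝ) : ℂ)) :=
      Complex.continuous_exp.comp (continuous_const.mul (Complex.continuous_ofReal.comp hc_cont))
    have h3 : Continuous fun y : ℝ => ((Real.exp (-y) / r : ℝ) : ℂ) :=
      Complex.continuous_ofReal.comp ((Real.continuous_exp.comp continuous_neg).div_const r)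
    exact (h1.sub h2).mul h3
  have hmaj : IntegrableOn (fun y : ℝ => 2 / r * Real.exp K * Real.exp (-2⁻¹ * y)) (Ioi 0) :=
    (exp_neg_integrableOn_Ioi 0 (by norm_num : (0:ℝ) < 2⁻¹)).const_mul _
  have hIntg : IntegrableOn g (Ioi 0) := by
    refine Integrable.mono' hmaj hgcont.aestronglyMeasurable.restrict ?_
    filter_upwards [ae_restrict_mem measurableSet_Ioi] with y hy using hnorm y hy
  have hre_pos : ∀ y ∈ Ioi (0:ℝ), 0 < (g y).re := by
    intro y hy
    have hy0 : (0:ℝ) < y := hy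
    have hcpos : 0 < c y := mul_pos hR0 (Real.rpow_pos_of_pos hy0 _)
    have hgyre : (g y).re = ((Complex.exp ((c y : ℝ) : ℂ)).re
        - (Complex.exp (w * ((c y : ℝ) : ℂ))).re) * (Real.exp (-y) / r) := by
      simp only [hg, Complex.mul_re, Complex.sub_re, Complex.ofReal_re, Complex.ofReal_im, mul_zero, sub_zero]
    have e1re : (Complex.exp ((c y : ℝ) : ℂ)).re = Real.exp (c y) := by
      rw [← Complex.ofReal_exp, Complex.ofReal_re]
    have hE2 : (Complex.exp (w * ((c y : ℝ) : ℂ))).re ≤ Real.exp (Real.cos (2 * Real.pi * α) * c y) :=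
      (Complex.re_le_norm _).trans (le_of_eq (habs2 y hy0))
    have hlt : Real.exp (Real.cos (2 * Real.pi * α) * c y) < Real.exp (c y) :=
      Real.exp_lt_exp.mpr (by nlinarith)
    rw [hgyre, e1re]
    have hfac : 0 < Real.exp (-y) / r := div_pos (Real.exp_pos _) hr
    have : 0 < Real.exp (c y) - (Complex.exp (w * ((c y : ℝ) : ℂ))).re := by linarith
    positivity
  have hIntgre : IntegrableOn (fun y => (g y).re) (Ioi 0) := hIntg.re
  have hpos : 0 < ∫ y in Ioi (0:ℝ), (g y).re := by
    rw [setIntegral_pos_iff_support_of_nonneg_ae ?_ hIntgre]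
    · have hsub : Ioi (0:ℝ) ⊆ Function.support fun y => (g y).re :=
        fun y hy => ne_of_gt (hre_pos y hy)
      rw [Set.inter_eq_self_of_subset_right hsub]
      simp [Real.volume_Ioi]
    · filter_upwards [ae_restrict_mem measurableSet_Ioi] with y hy using (hre_pos y hy).le
  have hIre : (∫ y in Ioi (0:ℝ), g y).re = ∫ y in Ioi (0:ℝ), (g y).re := by
    have := integral_re (μ := volume.restrict (Ioi (0:ℝ))) hIntg
    simpa using this.symm
  have hint_eq : (∫ y in Ioi (0:ℝ),
      ((Complex.exp ((r:ℂ) ^ (1 - (α:ℂ)) * (y:ℂ) ^ (α:ℂ)) -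
        Complex.exp (Complex.exp (-(2 * Real.pi * α : ℂ) * Complex.I) *
          (r:ℂ) ^ (1 - (α:ℂ)) * (y:ℂ) ^ (α:ℂ))) / (r:ℂ)) *
      Complex.exp (-(y:ℂ))) = ∫ y in Ioi (0:ℝ), g y :=
    setIntegral_congr_fun measurableSet_Ioi hEq
  have hinv : (2 * (Real.pi:ℂ) * Complex.I)⁻¹ = ((-(2 * Real.pi)⁻¹ : ℝ) : ℂ) * Complex.I := by
    rw [mul_inv, Complex.inv_I]; push_cast; ring
  have him : (GalphaPlus α r).im = -(2 * Real.pi)⁻¹ * (∫ y in Ioi (0:ℝ), g y).re := by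
    rw [GalphaPlus, hint_eq, hinv]
    simp [Complex.mul_im, Complex.mul_re]
  rw [him, hIre]
  have h2π : 0 < (2 * Real.pi)⁻¹ := by positivity
  nlinarith
end

section
/- Let α ∈ (0,1). Then the function r ↦ -r^α·Im(G_α(-r^+)) is monotone increasing on (0,∞). -/
open MeasureTheory Complex Set Filter

noncomputable def phiAux (c s x : ℝ) : ℝ :=
  (x - 1) * Real.exp x + (1 - c * x) * Real.exp (c * x) * Real.cos (s * x)
    + s * x * Real.exp (c * x) * Real.sin (s * x)

lemma phiAux_hasDerivAt (c s x : ℝ) :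
    HasDerivAt (phiAux c s)
      (x * Real.exp x + x * Real.exp (c * x) *
        ((s ^ 2 - c ^ 2) * Real.cos (s * x) + 2 * c * s * Real.sin (s * x))) x := by
  have hid : HasDerivAt (fun x : ℝ => x) 1 x := hasDerivAt_id x
  have he : HasDerivAt (fun x : ℝ => Real.exp x) (Real.exp x) x := Real.hasDerivAt_exp x
  have hcx : HasDerivAt (fun x : ℝ => c * x) c x := by simpa using hid.const_mul c
  have hsx : HasDerivAt (fun x : ℝ => s * x) s x := by simpa using hid.const_mul s
  have hec : HasDerivAt (fun x : ℝ => Real.exp (c * x)) (Real.exp (c * x) * c) x := hcx.exp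
  have hcos : HasDerivAt (fun x : ℝ => Real.cos (s * x)) (-Real.sin (s * x) * s) x := hsx.cos
  have hsin : HasDerivAt (fun x : ℝ => Real.sin (s * x)) (Real.cos (s * x) * s) x := hsx.sin
  have h1 : HasDerivAt (fun x : ℝ => (x - 1) * Real.exp x)
      (1 * Real.exp x + (x - 1) * Real.exp x) x := (hid.sub_const 1).mul he
  have h2 : HasDerivAt (fun x : ℝ => (1 - c * x) * Real.exp (c * x))
      ((0 - c) * Real.exp (c * x) + (1 - c * x) * (Real.exp (c * x) * c)) x :=
    ((hasDerivAt_const x (1:ℝ)).sub hcx).mul hec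
  have h3 := h2.mul hcos
  have h4 : HasDerivAt (fun x : ℝ => s * x * Real.exp (c * x))
      (s * Real.exp (c * x) + s * x * (Real.exp (c * x) * c)) x := hsx.mul hec
  have h5 := h4.mul hsin
  have := (h1.add h3).add h5
  refine this.congr_deriv ?_
  ring

lemma phiAux_nonneg (θ : ℝ) {x : ℝ} (hx : 0 ≤ x) :
    0 ≤ phiAux (Real.cos θ) (Real.sin θ) x := by
  set c := Real.cos θ with hc
  set s := Real.sin θ with hs
  have hmono : MonotoneOn (phiAux c s) (Ici 0) := by
    apply monotoneOn_of_deriv_nonneg (convex_Ici 0)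
    · exact fun z _ => (phiAux_hasDerivAt c s z).continuousAt.continuousWithinAt
    · exact fun z _ => (phiAux_hasDerivAt c s z).differentiableAt.differentiableWithinAt
    · intro z hz
      rw [interior_Ici] at hz
      rw [(phiAux_hasDerivAt c s z).deriv]
      have hpyth : s ^ 2 + c ^ 2 = 1 := Real.sin_sq_add_cos_sq θ
      have key : (s ^ 2 - c ^ 2) * Real.cos (s * z) + 2 * c * s * Real.sin (s * z)
          = -Real.cos (2 * θ + s * z) := by
        rw [Real.cos_add, Real.cos_two_mul, Real.sin_two_mul, ← hc, ← hs]
        linear_combination Real.cos (s * z) * hpyth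
      rw [key]
      have h1 : Real.cos (2 * θ + s * z) ≤ 1 := Real.cos_le_one _
      have h2 : Real.exp (c * z) ≤ Real.exp z := by
        apply Real.exp_le_exp.mpr
        nlinarith [Real.cos_le_one θ, le_of_lt (show (0:ℝ) < z from hz)]
      have hz0 : (0:ℝ) < z := hz
      have h3 : z * Real.exp (c * z) * Real.cos (2 * θ + s * z) ≤ z * Real.exp (c * z) * 1 :=
        mul_le_mul_of_nonneg_left h1 (by positivity)
      have h4 : z * Real.exp (c * z) ≤ z * Real.exp z := mul_le_mul_of_nonneg_left h2 hz0.le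
      nlinarith [h3, h4]
  have h0 : phiAux c s 0 = 0 := by simp [phiAux]
  have := hmono (self_mem_Ici (a := (0:ℝ))) hx hx
  rwa [h0] at this

noncomputable def psiAux (c s t b : ℝ) : ℝ :=
  (Real.exp (b * t) - Real.exp (c * (b * t)) * Real.cos (s * (b * t))) / b

lemma psiAux_hasDerivAt (c s t : ℝ) {b : ℝ} (hb : 0 < b) :
    HasDerivAt (psiAux c s t) (phiAux c s (b * t) / b ^ 2) b := by
  have hbt : HasDerivAt (fun b : ℝ => b * t) t b := by simpa using (hasDerivAt_id b).mul_const t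
  have h1 : HasDerivAt (fun b : ℝ => Real.exp (b * t)) (Real.exp (b * t) * t) b := hbt.exp
  have hcbt : HasDerivAt (fun b : ℝ => c * (b * t)) (c * t) b := by simpa using hbt.const_mul c
  have hsbt : HasDerivAt (fun b : ℝ => s * (b * t)) (s * t) b := by simpa using hbt.const_mul s
  have h2 : HasDerivAt (fun b : ℝ => Real.exp (c * (b * t))) (Real.exp (c * (b * t)) * (c * t)) b := hcbt.exp
  have h3 : HasDerivAt (fun b : ℝ => Real.cos (s * (b * t))) (-Real.sin (s * (b * t)) * (s * t)) b := hsbt.cos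
  have hN := h1.sub (h2.mul h3)
  have := hN.div (hasDerivAt_id b) hb.ne'
  refine this.congr_deriv ?_
  rw [div_eq_div_iff (by positivity) (by positivity)]
  simp only [phiAux, id_eq, Pi.sub_apply, Pi.mul_apply]
  ring

lemma psiAux_monotoneOn (θ t : ℝ) (ht : 0 ≤ t) :
    MonotoneOn (psiAux (Real.cos θ) (Real.sin θ) t) (Ioi 0) := by
  apply monotoneOn_of_deriv_nonneg (convex_Ioi 0)
  · exact fun b hb => (psiAux_hasDerivAt _ _ t hb).continuousAt.continuousWithinAt
  · rw [interior_Ioi]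
    exact fun b hb => (psiAux_hasDerivAt _ _ t hb).differentiableAt.differentiableWithinAt
  · rw [interior_Ioi]
    intro b hb
    rw [(psiAux_hasDerivAt _ _ t hb).deriv]
    exact div_nonneg (phiAux_nonneg θ (mul_nonneg hb.le ht)) (by positivity)

noncomputable def Ffun (α r : ℝ) (y : ℝ) : ℂ :=
  ((Complex.exp ((r:ℂ) ^ (1 - (α:ℂ)) * (y:ℂ) ^ (α:ℂ)) -
    Complex.exp (Complex.exp (-(2 * Real.pi * α : ℂ) * Complex.I) * (r:ℂ) ^ (1 - (α:ℂ)) * (y:ℂ) ^ (α:ℂ))) / (r:ℂ)) *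
  Complex.exp (-(y:ℂ))

noncomputable def Gfun (α r : ℝ) (y : ℝ) : ℂ :=
  ((↑(Real.exp (r ^ (1-α) * y ^ α)) -
    Complex.exp (↑(Real.cos (2*Real.pi*α) * (r ^ (1-α) * y ^ α)) -
      ↑(Real.sin (2*Real.pi*α) * (r ^ (1-α) * y ^ α)) * Complex.I)) / (r:ℂ)) * ↑(Real.exp (-y))

lemma Ffun_eq_Gfun {α r : ℝ} (hr : 0 < r) {y : ℝ} (hy : 0 < y) : Ffun α r y = Gfun α r y := by
  have e1 : (r:ℂ) ^ (1 - (α:ℂ)) = ((r ^ (1-α) : ℝ) : ℂ) := by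
    rw [Complex.ofReal_cpow hr.le]; push_cast; ring_nf
  have e2 : (y:ℂ) ^ (α:ℂ) = ((y ^ α : ℝ) : ℂ) := (Complex.ofReal_cpow hy.le α).symm
  have e3 : Complex.exp (-(2 * Real.pi * α : ℂ) * Complex.I)
      = ↑(Real.cos (2*Real.pi*α)) - ↑(Real.sin (2*Real.pi*α)) * Complex.I := by
    have h : (-(2 * Real.pi * α : ℂ)) = (((-(2*Real.pi*α)) : ℝ) : ℂ) := by push_cast; ring
    rw [h, Complex.exp_mul_I, ← Complex.ofReal_cos, ← Complex.ofReal_sin,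
      Real.cos_neg, Real.sin_neg]
    push_cast; ring
  have h2 : Complex.exp (-(2 * Real.pi * α : ℂ) * Complex.I) * (r:ℂ) ^ (1 - (α:ℂ)) * (y:ℂ) ^ (α:ℂ)
      = ↑(Real.cos (2*Real.pi*α) * (r ^ (1-α) * y ^ α)) -
        ↑(Real.sin (2*Real.pi*α) * (r ^ (1-α) * y ^ α)) * Complex.I := by
    rw [e3, e1, e2]; push_cast; ring
  unfold Ffun Gfun
  rw [h2, e1, e2]
  congr 1
  · congr 2
    rw [Complex.ofReal_exp, Complex.ofReal_mul]
  · rw [Complex.ofReal_exp, Complex.ofReal_neg]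

lemma exp_ofReal_sub_ofReal_mul_I (u v : ℝ) :
    Complex.exp (↑u - ↑v * Complex.I) =
      ↑(Real.exp u * Real.cos v) - ↑(Real.exp u * Real.sin v) * Complex.I := by
  apply Complex.ext <;>
    simp [Complex.exp_re, Complex.exp_im, Real.cos_neg, Real.sin_neg,
      ← Complex.ofReal_cos, ← Complex.ofReal_sin]

lemma Gfun_eq (α r y : ℝ) : Gfun α r y =
    ↑((Real.exp (r ^ (1-α) * y ^ α) -
        Real.exp (Real.cos (2*Real.pi*α) * (r ^ (1-α) * y ^ α)) *
          Real.cos (Real.sin (2*Real.pi*α) * (r ^ (1-α) * y ^ α))) / r * Real.exp (-y)) +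
    ↑(Real.exp (Real.cos (2*Real.pi*α) * (r ^ (1-α) * y ^ α)) *
        Real.sin (Real.sin (2*Real.pi*α) * (r ^ (1-α) * y ^ α)) / r * Real.exp (-y)) * Complex.I := by
  unfold Gfun
  rw [exp_ofReal_sub_ofReal_mul_I]
  push_cast
  ring

lemma Gfun_re (α r y : ℝ) : (Gfun α r y).re =
    (Real.exp (r ^ (1-α) * y ^ α) -
        Real.exp (Real.cos (2*Real.pi*α) * (r ^ (1-α) * y ^ α)) *
          Real.cos (Real.sin (2*Real.pi*α) * (r ^ (1-α) * y ^ α))) / r * Real.exp (-y) := by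
  rw [Gfun_eq]
  simp only [Complex.add_re, Complex.mul_I_re, Complex.ofReal_re, Complex.ofReal_im, neg_zero,
    add_zero]

lemma growth (K : ℝ) (hK : 0 ≤ K) {α : ℝ} (hα : α ∈ Set.Ioo (0:ℝ) 1) :
    ∃ C : ℝ, 0 ≤ C ∧ ∀ y : ℝ, 0 < y → K * y ^ α ≤ C + y / 2 := by
  obtain ⟨hα0, hα1⟩ := hα
  set y0 : ℝ := max 1 ((2*K) ^ (1-α)⁻¹) with hy0
  have hy0pos : (0:ℝ) < y0 := lt_of_lt_of_le one_pos (le_max_left _ _)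
  refine ⟨K * y0 ^ α, by positivity, fun y hy => ?_⟩
  rcases le_total y y0 with h | h
  · have h1 : y ^ α ≤ y0 ^ α := Real.rpow_le_rpow hy.le h hα0.le
    nlinarith [mul_le_mul_of_nonneg_left h1 hK]
  · have h2K : 2*K ≤ y ^ (1-α) := by
      calc 2*K = ((2*K) ^ (1-α)⁻¹) ^ (1-α) := by
            rw [← Real.rpow_mul (by positivity), inv_mul_cancel₀ (by linarith), Real.rpow_one]
        _ ≤ y ^ (1-α) := Real.rpow_le_rpow (by positivity)
            (le_trans (le_max_right _ _) h) (by linarith)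
    have hid : y ^ (1-α) * y ^ α = y := by
      rw [← Real.rpow_add hy]; simp
    have h3 : 2 * K * y ^ α ≤ y := by
      have := mul_le_mul_of_nonneg_right h2K (Real.rpow_nonneg hy.le α)
      rwa [hid] at this
    have hC : 0 ≤ K * y0 ^ α := by positivity
    linarith

lemma integrableG {α r : ℝ} (hα : α ∈ Set.Ioo (0:ℝ) 1) (hr : 0 < r) :
    MeasureTheory.IntegrableOn (Gfun α r) (Set.Ioi 0) := by
  obtain ⟨C, hC0, hC⟩ := growth (r ^ (1-α)) (Real.rpow_nonneg hr.le _) hα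
  apply MeasureTheory.Integrable.mono'
    (g := fun y : ℝ => (2 / r * Real.exp C) * Real.exp (-(1/2) * y))
  · exact ((exp_neg_integrableOn_Ioi 0 (by norm_num : (0:ℝ) < 1/2)).const_mul _)
  · apply ContinuousOn.aestronglyMeasurable ?_ measurableSet_Ioi
    have hrp : ContinuousOn (fun y : ℝ => r ^ (1-α) * y ^ α) (Set.Ioi 0) :=
      ContinuousOn.mul continuousOn_const
        (fun y hy => (Real.continuousAt_rpow_const y α (Or.inl (ne_of_gt hy))).continuousWithinAt)
    unfold Gfun
    apply ContinuousOn.mul ?_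
      (Complex.continuous_ofReal.comp (Real.continuous_exp.comp continuous_neg)).continuousOn
    apply ContinuousOn.div_const
    apply ContinuousOn.sub
    · exact Complex.continuous_ofReal.comp_continuousOn (Real.continuous_exp.comp_continuousOn hrp)
    · apply Complex.continuous_exp.comp_continuousOn
      apply ContinuousOn.sub
      · exact Complex.continuous_ofReal.comp_continuousOn (hrp.const_smul (Real.cos (2*Real.pi*α)))
      · exact ContinuousOn.mul
          (Complex.continuous_ofReal.comp_continuousOn (hrp.const_smul (Real.sin (2*Real.pi*α))))
          continuousOn_const
  · filter_upwards [MeasureTheory.ae_restrict_mem measurableSet_Ioi] with y hy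
    have hy' : (0:ℝ) < y := hy
    set a : ℝ := r ^ (1-α) * y ^ α with ha
    have ha0 : 0 ≤ a := by positivity
    have hca : Real.cos (2*Real.pi*α) * a ≤ a := by
      nlinarith [Real.cos_le_one (2*Real.pi*α)]
    have hnorm : ‖Gfun α r y‖ ≤ 2 * Real.exp a / r * Real.exp (-y) := by
      unfold Gfun
      rw [norm_mul, norm_div]
      have h2 : ‖(↑(Real.exp a) : ℂ)‖ = Real.exp a := by
        rw [Complex.norm_real]; exact abs_of_pos (Real.exp_pos a)
      have h3 : ‖Complex.exp (↑(Real.cos (2*Real.pi*α) * a) -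
          ↑(Real.sin (2*Real.pi*α) * a) * Complex.I)‖ ≤ Real.exp a := by
        rw [Complex.norm_exp]
        apply Real.exp_le_exp.mpr
        simp only [Complex.sub_re, Complex.ofReal_re, Complex.mul_I_re, Complex.ofReal_im,
          neg_zero, sub_zero]
        exact hca
      have h1 : ‖(↑(Real.exp a) - Complex.exp (↑(Real.cos (2*Real.pi*α) * a) -
          ↑(Real.sin (2*Real.pi*α) * a) * Complex.I))‖ ≤ 2 * Real.exp a := by
        calc ‖_ - _‖ ≤ _ + _ := norm_sub_le _ _
          _ ≤ 2 * Real.exp a := by rw [h2]; linarith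
      have h4 : ‖((r:ℝ) : ℂ)‖ = r := by rw [Complex.norm_real]; exact abs_of_pos hr
      have h5 : ‖(↑(Real.exp (-y)) : ℂ)‖ = Real.exp (-y) := by
        rw [Complex.norm_real]; exact abs_of_pos (Real.exp_pos _)
      rw [h4, h5]
      exact mul_le_mul_of_nonneg_right
        ((div_le_div_iff_of_pos_right hr).mpr h1) (Real.exp_pos _).le
    calc ‖Gfun α r y‖ ≤ 2 * Real.exp a / r * Real.exp (-y) := hnorm
      _ ≤ 2 / r * Real.exp C * Real.exp (-(1/2) * y) := by
          rw [div_mul_eq_mul_div, mul_comm (2 / r) (Real.exp C)]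
          have key : Real.exp a * Real.exp (-y) ≤ Real.exp C * Real.exp (-(1/2)*y) := by
            rw [← Real.exp_add, ← Real.exp_add]
            apply Real.exp_le_exp.mpr
            have := hC y hy'
            rw [ha]
            linarith
          calc 2 * Real.exp a * Real.exp (-y) / r
              = 2 * (Real.exp a * Real.exp (-y)) / r := by ring
            _ ≤ 2 * (Real.exp C * Real.exp (-(1/2)*y)) / r := by
                apply (div_le_div_iff_of_pos_right hr).mpr
                nlinarith [key]
            _ = Real.exp C * (2 / r) * Real.exp (-(1/2)*y) := by ring

lemma integrableF {α r : ℝ} (hα : α ∈ Set.Ioo (0:ℝ) 1) (hr : 0 < r) :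
    MeasureTheory.IntegrableOn (Ffun α r) (Set.Ioi 0) :=
  (integrableG hα hr).congr_fun (fun _ hy => (Ffun_eq_Gfun hr hy).symm) measurableSet_Ioi

noncomputable def Hfun (α r y : ℝ) : ℝ :=
  psiAux (Real.cos (2*Real.pi*α)) (Real.sin (2*Real.pi*α)) (y ^ α) (r ^ (1-α)) * Real.exp (-y)

lemma Hfun_eq {α r : ℝ} (hr : 0 < r) {y : ℝ} (hy : 0 < y) :
    Hfun α r y = r ^ α * (Ffun α r y).re := by
  rw [Ffun_eq_Gfun hr hy, Gfun_re]
  unfold Hfun psiAux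
  have hbne : r ^ (1-α) ≠ 0 := ne_of_gt (Real.rpow_pos_of_pos hr _)
  have key : r ^ α / r = (r ^ (1-α))⁻¹ := by
    rw [div_eq_iff (ne_of_gt hr), inv_mul_eq_div, eq_div_iff hbne, ← Real.rpow_add hr]
    norm_num
  rw [div_eq_mul_inv, ← key]
  ring

lemma GalphaPlus_formula {α : ℝ} (hα : α ∈ Set.Ioo (0:ℝ) 1) {ρ : ℝ} (hρ : 0 < ρ) :
    -(ρ ^ α) * (GalphaPlus α ρ).im = (2*Real.pi)⁻¹ * ∫ y in Set.Ioi (0:ℝ), Hfun α ρ y := by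
  have hint : MeasureTheory.IntegrableOn (Ffun α ρ) (Set.Ioi 0) := integrableF hα hρ
  have hG : GalphaPlus α ρ = (2 * Real.pi * Complex.I)⁻¹ * ∫ y in Set.Ioi (0:ℝ), Ffun α ρ y := rfl
  have him : (GalphaPlus α ρ).im
      = -((2*Real.pi)⁻¹ * (∫ y in Set.Ioi (0:ℝ), Ffun α ρ y).re) := by
    rw [hG]
    set Z := ∫ y in Set.Ioi (0:ℝ), Ffun α ρ y
    have h1 : (2 * (Real.pi:ℂ) * Complex.I)⁻¹ = (((2*Real.pi)⁻¹ : ℝ) : ℂ) * (-Complex.I) := by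
      rw [mul_inv, Complex.inv_I]
      push_cast
      ring
    rw [h1]
    simp [Complex.mul_im, Complex.mul_re]
  have hre : (∫ y in Set.Ioi (0:ℝ), Ffun α ρ y).re
      = ∫ y in Set.Ioi (0:ℝ), (Ffun α ρ y).re := by
    have h := integral_re hint
    simp only [RCLike.re_to_complex] at h
    exact h.symm
  rw [him, hre]
  have h2 : -(ρ ^ α) * -((2*Real.pi)⁻¹ * ∫ y in Set.Ioi (0:ℝ), (Ffun α ρ y).re)
      = (2*Real.pi)⁻¹ * ∫ y in Set.Ioi (0:ℝ), ρ ^ α * (Ffun α ρ y).re := by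
    rw [MeasureTheory.integral_const_mul]
    ring
  rw [h2]
  congr 1
  exact MeasureTheory.setIntegral_congr_fun measurableSet_Ioi
    (fun y hy => (Hfun_eq hρ hy).symm)

/-- `r ↦ -r^α Im(G_α(-r^+))` is monotone increasing on `(0,∞)`. -/
theorem GalphaPlus_weighted_im_monotone (α : ℝ) (hα : α ∈ Set.Ioo (0:ℝ) 1) :
    MonotoneOn (fun r : ℝ => -(r ^ α) * (GalphaPlus α r).im) (Set.Ioi 0) := by
  intro r hr r' hr' hrr'
  have hr0 : (0:ℝ) < r := hr
  have hr0' : (0:ℝ) < r' := hr'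
  simp only
  rw [GalphaPlus_formula hα hr0, GalphaPlus_formula hα hr0']
  have hintH : ∀ {ρ : ℝ}, 0 < ρ → MeasureTheory.IntegrableOn (Hfun α ρ) (Set.Ioi 0) := by
    intro ρ hρ
    apply (((integrableF hα hρ).re.const_mul (ρ ^ α)).congr ?_)
    filter_upwards [MeasureTheory.ae_restrict_mem measurableSet_Ioi] with y hy
    exact (Hfun_eq hρ hy).symm
  apply mul_le_mul_of_nonneg_left ?_ (by positivity)
  apply MeasureTheory.setIntegral_mono_on (hintH hr0) (hintH hr0') measurableSet_Ioi
  intro y hy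
  have hy0 : (0:ℝ) < y := hy
  unfold Hfun
  apply mul_le_mul_of_nonneg_right ?_ (Real.exp_pos _).le
  exact psiAux_monotoneOn (2*Real.pi*α) (y ^ α) (Real.rpow_nonneg hy0.le α)
    (Real.rpow_pos_of_pos hr0 _) (Real.rpow_pos_of_pos hr0' _)
    (Real.rpow_le_rpow hr0.le hrr' (by linarith [hα.2]))
end

section
/- Let α ∈ (0,1). Then there exist ε > 0 and C > 0 such that for all t ∈ (0,ε) one has |θ_α(t) - α| ≤ C·t^{1-α}; that is, θ_α(t) = α + O(t^{1-α}) as t → 0+. -/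
open MeasureTheory Complex Set Filter

lemma arctan_nonneg' {x : ℝ} (hx : 0 ≤ x) : 0 ≤ Real.arctan x := by
  have := Real.arctan_strictMono.monotone hx
  rwa [Real.arctan_zero] at this

lemma abs_arctan_le_abs (x : ℝ) : |Real.arctan x| ≤ |x| := by
  have key : ∀ y : ℝ, 0 ≤ y → Real.arctan y ≤ y := by
    intro y hy
    have h1 : Real.arctan y ≤ Real.tan (Real.arctan y) :=
      Real.le_tan (arctan_nonneg' hy) (Real.arctan_lt_pi_div_two y)
    rwa [Real.tan_arctan] at h1
  rcases le_or_gt 0 x with hx | hx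
  · rw [_root_.abs_of_nonneg (arctan_nonneg' hx), _root_.abs_of_nonneg hx]; exact key x hx
  · have h0 : 0 ≤ Real.arctan (-x) := arctan_nonneg' (by linarith)
    rw [Real.arctan_neg] at h0
    rw [_root_.abs_of_nonpos (by linarith), _root_.abs_of_neg hx, ← Real.arctan_neg]
    exact key (-x) (by linarith)

lemma exp_taylor_bound (u : ℂ) :
    ‖Complex.exp u - 1 - u‖ ≤ 3 * ‖u‖ ^ 2 * Real.exp ‖u‖ := by
  have h1 : (1:ℝ) ≤ Real.exp ‖u‖ := Real.one_le_exp (norm_nonneg u)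
  rcases le_or_gt ‖u‖ 1 with h | h
  · have h2 := Complex.norm_exp_sub_one_sub_id_le (x := u) h
    nlinarith [norm_nonneg (Complex.exp u - 1 - u), sq_nonneg ‖u‖, norm_nonneg u]
  · have h2 : ‖Complex.exp u - 1 - u‖ ≤ ‖Complex.exp u‖ + 1 + ‖u‖ := by
      calc ‖Complex.exp u - 1 - u‖ ≤ ‖Complex.exp u - 1‖ + ‖u‖ := norm_sub_le _ _
        _ ≤ ‖Complex.exp u‖ + 1 + ‖u‖ := by
            have := norm_sub_le (Complex.exp u) 1; simp at this ⊢; linarith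
    have h3 : ‖Complex.exp u‖ ≤ Real.exp ‖u‖ := by
      rw [Complex.norm_exp]
      exact Real.exp_le_exp.mpr ((Complex.re_le_norm u).trans le_rfl)
    nlinarith [sq_nonneg (‖u‖ - 1), norm_nonneg u]

lemma rpow_le_K_add {α : ℝ} (hα0 : 0 < α) (hα1 : α < 1) {y : ℝ} (hy : 0 < y) :
    y ^ α ≤ (6:ℝ) ^ (1/(1-α)) + y / 6 := by
  set K : ℝ := (6:ℝ) ^ (1/(1-α)) with hK
  have h1α : 0 < 1 - α := by linarith
  have hK1 : (1:ℝ) ≤ K := by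
    rw [hK]; apply Real.one_le_rpow (by norm_num) (by positivity)
  rcases le_or_gt y K with h | h
  · have : y ^ α ≤ K ^ α := Real.rpow_le_rpow hy.le h hα0.le
    have h2 : K ^ α ≤ K ^ (1:ℝ) := Real.rpow_le_rpow_of_exponent_le hK1 (by linarith)
    rw [Real.rpow_one] at h2
    have : y ^ α ≤ K := this.trans h2
    linarith [div_nonneg hy.le (by norm_num : (0:ℝ) ≤ 6)]
  · have hKpos : 0 < K := by linarith
    have h6 : (6:ℝ) ≤ y ^ (1-α) := by
      have : K ^ (1-α) ≤ y ^ (1-α) := Real.rpow_le_rpow hKpos.le h.le h1α.le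
      rwa [hK, ← Real.rpow_mul (by norm_num : (0:ℝ) ≤ 6), one_div,
        inv_mul_cancel₀ h1α.ne', Real.rpow_one] at this
    have hsplit : y ^ (1-α) * y ^ α = y := by
      rw [← Real.rpow_add hy]; norm_num
    have hyα : 0 < y ^ α := Real.rpow_pos_of_pos hy α
    have : 6 * y ^ α ≤ y ^ (1-α) * y ^ α := by nlinarith
    rw [hsplit] at this
    nlinarith [hK1]

lemma growth_bound {α : ℝ} (hα0 : 0 < α) (hα1 : α < 1) {y : ℝ} (hy : 0 < y) :
    (y ^ α) ^ 2 * Real.exp (y ^ α) * Real.exp (-y) ≤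
      Real.exp (3 * (6:ℝ) ^ (1/(1-α))) * Real.exp (-(1/2) * y) := by
  set u : ℝ := y ^ α with hu
  have hu0 : 0 ≤ u := Real.rpow_nonneg hy.le α
  have h1 : u ^ 2 ≤ Real.exp (2 * u) := by
    have := Real.add_one_le_exp u
    have h2 : u ≤ Real.exp u := by linarith
    calc u ^ 2 ≤ Real.exp u ^ 2 := by nlinarith
      _ = Real.exp (2 * u) := by rw [← Real.exp_nat_mul]; norm_num [mul_comm]
  have h3 : u ≤ (6:ℝ) ^ (1/(1-α)) + y / 6 := rpow_le_K_add hα0 hα1 hy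
  calc (y ^ α) ^ 2 * Real.exp (y ^ α) * Real.exp (-y)
      ≤ Real.exp (2*u) * Real.exp u * Real.exp (-y) := by
        apply mul_le_mul_of_nonneg_right (mul_le_mul_of_nonneg_right h1 (Real.exp_pos u).le)
          (Real.exp_pos _).le
    _ = Real.exp (3*u - y) := by rw [← Real.exp_add, ← Real.exp_add]; ring_nf
    _ ≤ Real.exp (3 * (6:ℝ) ^ (1/(1-α)) + (-(1/2) * y)) := by
        apply Real.exp_le_exp.mpr; nlinarith
    _ = Real.exp (3 * (6:ℝ) ^ (1/(1-α))) * Real.exp (-(1/2) * y) := Real.exp_add _ _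

lemma one_sub_exp_neg_two (θ : ℝ) :
    (1:ℂ) - Complex.exp (((-(2*θ) : ℝ) : ℂ) * I) =
      2 * (Real.sin θ : ℂ) * I * Complex.exp (((-θ : ℝ) : ℂ) * I) := by
  have hdiff : Complex.exp ((θ:ℂ) * I) - Complex.exp (((-θ : ℝ) : ℂ) * I)
      = 2 * (Real.sin θ : ℂ) * I := by
    rw [show (((-θ : ℝ) : ℂ)) = -(θ:ℂ) by push_cast; ring]
    rw [Complex.exp_mul_I, Complex.exp_mul_I, Complex.cos_neg, Complex.sin_neg,
      ← Complex.ofReal_sin]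
    ring
  have hsplit : (1:ℂ) - Complex.exp (((-(2*θ) : ℝ) : ℂ) * I)
      = Complex.exp (((-θ : ℝ) : ℂ) * I) *
        (Complex.exp ((θ:ℂ) * I) - Complex.exp (((-θ : ℝ) : ℂ) * I)) := by
    rw [mul_sub, ← Complex.exp_add, ← Complex.exp_add]
    rw [show ((-θ : ℝ) : ℂ) * I + (θ:ℂ) * I = 0 by push_cast; ring,
      show ((-θ : ℝ) : ℂ) * I + ((-θ : ℝ) : ℂ) * I = ((-(2*θ) : ℝ) : ℂ) * I by
        push_cast; ring, Complex.exp_zero]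
  rw [hsplit, hdiff]; ring

set_option maxHeartbeats 1600000 in
/-- `θ_α(t) = α + O(t^{1-α})` as `t → 0⁺`. -/
theorem thetaFun_near_zero (α : ℝ) (hα : α ∈ Set.Ioo (0:ℝ) 1) :
    ∃ ε > (0:ℝ), ∃ C > (0:ℝ), ∀ t ∈ Set.Ioo (0:ℝ) ε,
      |thetaFun α t - α| ≤ C * t ^ (1 - α) := by
  obtain ⟨hα0, hα1⟩ := hα
  have hπ := Real.pi_pos
  have h1α : (0:ℝ) < 1 - α := by linarith
  set θ : ℝ := Real.pi * α with hθdef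
  have hθ0 : 0 < θ := mul_pos hπ hα0
  have hθπ : θ < Real.pi := by nlinarith
  have hsin : 0 < Real.sin θ := Real.sin_pos_of_pos_of_lt_pi hθ0 hθπ
  set A : ℝ := Real.Gamma (α+1) with hAdef
  have hA : 0 < A := Real.Gamma_pos_of_pos (by linarith)
  set K : ℝ := (6:ℝ) ^ (1/(1-α)) with hKdef
  set I₀ : ℝ := ∫ y in Set.Ioi (0:ℝ), Real.exp (-(1/2) * y) with hI₀def
  have hI₀ : 0 ≤ I₀ := integral_nonneg fun y => (Real.exp_pos _).le
  set C₁ : ℝ := 3 * Real.exp (3*K) * I₀ / (Real.sin θ * A) + 1 with hC₁def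
  have hC₁ : 0 < C₁ := by
    rw [hC₁def]
    have h0 : (0:ℝ) ≤ 3 * Real.exp (3*K) * I₀ / (Real.sin θ * A) :=
      div_nonneg (by positivity) (le_of_lt (mul_pos hsin hA))
    linarith
  set m : ℝ := min (1/2 : ℝ) (Real.pi * (1-α) / 4) with hmdef
  have hm0 : 0 < m := lt_min (by norm_num) (by positivity)
  set ε : ℝ := min 1 ((m / C₁) ^ (1/(1-α))) with hεdef
  have hε0 : 0 < ε := lt_min one_pos (Real.rpow_pos_of_pos (div_pos hm0 hC₁) _)
  refine ⟨ε, hε0, 2 * C₁ / Real.pi, by positivity, ?_⟩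
  rintro t ⟨ht0, htε⟩
  have ht1 : t ≤ 1 := le_of_lt (lt_of_lt_of_le htε (min_le_left _ _))
  set s : ℝ := t ^ (1-α) with hsdef
  have hs0 : 0 < s := Real.rpow_pos_of_pos ht0 _
  have hs1 : s ≤ 1 := Real.rpow_le_one ht0.le ht1 h1α.le
  have hsm : C₁ * s ≤ m := by
    have h1 : t ≤ (m/C₁) ^ (1/(1-α)) := le_of_lt (lt_of_lt_of_le htε (min_le_right _ _))
    have h2 : s ≤ ((m/C₁) ^ (1/(1-α))) ^ (1-α) := Real.rpow_le_rpow ht0.le h1 h1α.le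
    have h3 : ((m/C₁) ^ (1/(1-α))) ^ (1-α) = m/C₁ := by
      rw [← Real.rpow_mul (by positivity), one_div, inv_mul_cancel₀ h1α.ne', Real.rpow_one]
    rw [h3] at h2
    calc C₁ * s ≤ C₁ * (m/C₁) := mul_le_mul_of_nonneg_left h2 hC₁.le
      _ = m := by field_simp
  have hmhalf : m ≤ 1/2 := min_le_left _ _
  have hm4 : m ≤ Real.pi * (1-α) / 4 := min_le_right _ _
  clear_value θ A K I₀ C₁ m ε s
  -- complex abbreviations
  set q : ℂ := Complex.exp (-(2 * (Real.pi:ℂ) * (α:ℂ)) * Complex.I) with hqdef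
  set W : ℝ → ℂ := fun y => ((s * y ^ α : ℝ) : ℂ) with hWdef
  set g : ℝ → ℂ := fun y =>
      (Complex.exp (W y) - 1 - W y) * Complex.exp (-(y:ℂ)) -
      (Complex.exp (q * W y) - 1 - q * W y) * Complex.exp (-(y:ℂ)) with hgdef
  set E : ℂ := ∫ y in Set.Ioi (0:ℝ), g y with hEdef
  clear_value q W g E
  have hqnorm : ‖q‖ = 1 := by
    rw [hqdef, Complex.norm_exp]
    simp
  have hkey : (1 : ℂ) - q = 2 * (Real.sin θ : ℂ) * I * Complex.exp (((-θ:ℝ):ℂ) * I) := by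
    rw [hqdef, show (-(2 * (Real.pi:ℂ) * (α:ℂ)) * Complex.I) = (((-(2*θ):ℝ):ℂ) * I) by
      rw [hθdef]; push_cast; ring]
    exact one_sub_exp_neg_two θ
  have hAeq : A = ∫ y in Set.Ioi (0:ℝ), Real.exp (-y) * y ^ α := by
    rw [hAdef, Real.Gamma_eq_integral (by linarith : (0:ℝ) < α + 1)]
    norm_num
  have hbase : IntegrableOn (fun y : ℝ => Real.exp (-y) * y ^ α) (Set.Ioi 0) := by
    have := Real.GammaIntegral_convergent (show (0:ℝ) < α + 1 by linarith)
    simpa using this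
  -- part 1 : integrability and value
  have heq1 : Set.EqOn (fun y : ℝ => ((1-q) * (s:ℂ)) * ((Real.exp (-y) * y ^ α : ℝ) : ℂ))
      (fun y : ℝ => (1-q) * W y * Complex.exp (-(y:ℂ))) (Set.Ioi 0) := by
    intro y hy
    simp only [hWdef, Complex.ofReal_mul, Complex.ofReal_exp, Complex.ofReal_neg]
    ring
  have hint1 : IntegrableOn (fun y : ℝ => (1-q) * W y * Complex.exp (-(y:ℂ))) (Set.Ioi 0) :=
    IntegrableOn.congr_fun (hbase.ofReal.const_mul ((1-q) * (s:ℂ))) heq1 measurableSet_Ioi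
  have hval1 : ∫ y in Set.Ioi (0:ℝ), (1-q) * W y * Complex.exp (-(y:ℂ))
      = (1-q) * (s:ℂ) * (A:ℂ) := by
    rw [← setIntegral_congr_fun measurableSet_Ioi heq1, integral_const_mul, hAeq]
    congr 1
    exact integral_ofReal
  -- continuity of g on Ioi 0
  have hrpow_cont : ContinuousOn (fun y : ℝ => y ^ α) (Set.Ioi 0) := fun y hy =>
    (Real.continuousAt_rpow_const y α (Or.inl (ne_of_gt hy))).continuousWithinAt
  have hWcont : ContinuousOn W (Set.Ioi 0) := by
    rw [hWdef]
    exact Complex.continuous_ofReal.comp_continuousOn (continuousOn_const.mul hrpow_cont)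
  have hexpy : Continuous (fun y : ℝ => Complex.exp (-(y:ℂ))) :=
    Complex.continuous_exp.comp (Complex.continuous_ofReal.neg)
  have hgcont : ContinuousOn g (Set.Ioi 0) := by
    rw [hgdef]
    apply ContinuousOn.sub
    · exact (((Complex.continuous_exp.comp_continuousOn hWcont).sub
        continuousOn_const).sub hWcont).mul hexpy.continuousOn
    · exact (((Complex.continuous_exp.comp_continuousOn (continuousOn_const.mul hWcont)).sub
        continuousOn_const).sub (continuousOn_const.mul hWcont)).mul hexpy.continuousOn
  -- pointwise bound on g
  have hgle : ∀ y ∈ Set.Ioi (0:ℝ), ‖g y‖ ≤ 6 * s^2 * Real.exp (3*K) * Real.exp (-(1/2) * y) := by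
    intro y hy
    have hy0 : 0 < y := hy
    have hyα : 0 < y ^ α := Real.rpow_pos_of_pos hy0 α
    have hw0 : (0:ℝ) ≤ s * y ^ α := by positivity
    have hWnorm : ‖W y‖ = s * y ^ α := by
      rw [hWdef]
      simp only [Complex.norm_real, Real.norm_eq_abs]
      exact _root_.abs_of_nonneg hw0
    have hqWnorm : ‖q * W y‖ = s * y ^ α := by rw [norm_mul, hqnorm, one_mul, hWnorm]
    have hexpynorm : ‖Complex.exp (-(y:ℂ))‖ = Real.exp (-y) := by
      rw [Complex.norm_exp]; simp
    have t1 : ‖Complex.exp (W y) - 1 - W y‖ ≤ 3 * (s * y^α)^2 * Real.exp (s * y^α) := by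
      have := exp_taylor_bound (W y); rwa [hWnorm] at this
    have t2 : ‖Complex.exp (q * W y) - 1 - q * W y‖ ≤ 3 * (s * y^α)^2 * Real.exp (s * y^α) := by
      have := exp_taylor_bound (q * W y); rwa [hqWnorm] at this
    have hsplit : ‖g y‖ ≤ 6 * (s * y^α)^2 * Real.exp (s * y^α) * Real.exp (-y) := by
      rw [hgdef]
      calc ‖(Complex.exp (W y) - 1 - W y) * Complex.exp (-(y:ℂ)) -
            (Complex.exp (q * W y) - 1 - q * W y) * Complex.exp (-(y:ℂ))‖
          ≤ ‖(Complex.exp (W y) - 1 - W y) * Complex.exp (-(y:ℂ))‖ +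
            ‖(Complex.exp (q * W y) - 1 - q * W y) * Complex.exp (-(y:ℂ))‖ := norm_sub_le _ _
        _ = ‖Complex.exp (W y) - 1 - W y‖ * Real.exp (-y) +
            ‖Complex.exp (q * W y) - 1 - q * W y‖ * Real.exp (-y) := by
            rw [norm_mul, norm_mul, hexpynorm]
        _ ≤ 3 * (s * y^α)^2 * Real.exp (s * y^α) * Real.exp (-y) +
            3 * (s * y^α)^2 * Real.exp (s * y^α) * Real.exp (-y) := by
            have he := Real.exp_pos (-y)
            apply add_le_add <;> exact mul_le_mul_of_nonneg_right (by assumption) he.le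
        _ = 6 * (s * y^α)^2 * Real.exp (s * y^α) * Real.exp (-y) := by ring
    have hwle : s * y ^ α ≤ y ^ α := by nlinarith
    have hgrow := growth_bound hα0 hα1 hy0
    rw [← hKdef] at hgrow
    calc ‖g y‖ ≤ 6 * (s * y^α)^2 * Real.exp (s * y^α) * Real.exp (-y) := hsplit
      _ = 6 * s^2 * ((y^α)^2 * Real.exp (s * y^α) * Real.exp (-y)) := by ring
      _ ≤ 6 * s^2 * ((y^α)^2 * Real.exp (y^α) * Real.exp (-y)) := by
          have : Real.exp (s * y^α) ≤ Real.exp (y^α) := Real.exp_le_exp.mpr hwle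
          have h2 : (0:ℝ) ≤ (y^α)^2 := sq_nonneg _
          have h3 : (0:ℝ) ≤ 6 * s^2 := by positivity
          apply mul_le_mul_of_nonneg_left _ h3
          apply mul_le_mul_of_nonneg_right _ (Real.exp_pos _).le
          exact mul_le_mul_of_nonneg_left this h2
      _ ≤ 6 * s^2 * (Real.exp (3*K) * Real.exp (-(1/2) * y)) := by
          apply mul_le_mul_of_nonneg_left _ (by positivity : (0:ℝ) ≤ 6 * s^2)
          exact hgrow
      _ = 6 * s^2 * Real.exp (3*K) * Real.exp (-(1/2) * y) := by ring
  -- integrability of g and bound on E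
  have hb_int : IntegrableOn (fun y : ℝ => 6 * s^2 * Real.exp (3*K) * Real.exp (-(1/2) * y))
      (Set.Ioi 0) := by
    have := (exp_neg_integrableOn_Ioi 0 (by norm_num : (0:ℝ) < 1/2))
    exact this.const_mul _
  have hgmeas : AEStronglyMeasurable g (volume.restrict (Set.Ioi (0:ℝ))) :=
    hgcont.aestronglyMeasurable measurableSet_Ioi
  have hgae : ∀ᵐ y ∂(volume.restrict (Set.Ioi (0:ℝ))),
      ‖g y‖ ≤ 6 * s^2 * Real.exp (3*K) * Real.exp (-(1/2) * y) :=
    (ae_restrict_iff' measurableSet_Ioi).2 (Filter.Eventually.of_forall hgle)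
  have hg_int : IntegrableOn g (Set.Ioi 0) := Integrable.mono' hb_int hgmeas hgae
  have hE : ‖E‖ ≤ 6 * s^2 * Real.exp (3*K) * I₀ := by
    rw [hEdef]
    calc ‖∫ y in Set.Ioi (0:ℝ), g y‖
        ≤ ∫ y in Set.Ioi (0:ℝ), 6 * s^2 * Real.exp (3*K) * Real.exp (-(1/2) * y) :=
          norm_integral_le_of_norm_le hb_int hgae
      _ = 6 * s^2 * Real.exp (3*K) * I₀ := by rw [hI₀def, ← integral_const_mul]
  -- rewrite GalphaPlus
  have hcpow : ∀ y ∈ Set.Ioi (0:ℝ), ((t:ℂ) ^ (1 - (α:ℂ)) * (y:ℂ) ^ (α:ℂ)) = W y := by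
    intro y hy
    have h1 : (1 - (α:ℂ)) = (((1-α : ℝ)):ℂ) := by push_cast; ring
    rw [h1, ← Complex.ofReal_cpow ht0.le, ← Complex.ofReal_cpow (le_of_lt hy),
      ← Complex.ofReal_mul, hWdef, hsdef]
  have hG : GalphaPlus α t
      = (2 * (Real.pi:ℂ) * I)⁻¹ * (((1-q) * (s:ℂ) * (A:ℂ) + E) / (t:ℂ)) := by
    have hint_eq : (∫ y in Set.Ioi (0:ℝ),
        ((Complex.exp ((t:ℂ) ^ (1 - (α:ℂ)) * (y:ℂ) ^ (α:ℂ)) -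
          Complex.exp (q * (t:ℂ) ^ (1 - (α:ℂ)) * (y:ℂ) ^ (α:ℂ))) / (t:ℂ)) *
          Complex.exp (-(y:ℂ)))
        = ∫ y in Set.Ioi (0:ℝ), ((1-q) * W y * Complex.exp (-(y:ℂ)) + g y) / (t:ℂ) := by
      apply setIntegral_congr_fun measurableSet_Ioi
      intro y hy
      simp only [mul_assoc q, hcpow y hy, hgdef]
      field_simp
      ring
    simp only [GalphaPlus]
    rw [← hqdef, hint_eq, integral_div, integral_add hint1 hg_int, hval1, hEdef]
  -- factorization of GalphaPlus
  have hq1 : ‖(1:ℂ) - q‖ = 2 * Real.sin θ := by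
    rw [hkey, norm_mul, norm_mul, norm_mul]
    simp only [Complex.norm_two, Complex.norm_I, Complex.norm_real, Real.norm_eq_abs,
      Complex.norm_exp_ofReal_mul_I]
    rw [_root_.abs_of_pos hsin]
    ring
  have h1qnz : (1:ℂ) - q ≠ 0 := by
    intro h
    rw [h] at hq1
    simp at hq1
    linarith
  have hsnz : (s:ℂ) ≠ 0 := Complex.ofReal_ne_zero.mpr hs0.ne'
  have hAnz : (A:ℂ) ≠ 0 := Complex.ofReal_ne_zero.mpr hA.ne'
  have htnz : (t:ℂ) ≠ 0 := Complex.ofReal_ne_zero.mpr ht0.ne'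
  set δ : ℂ := E / ((1-q) * (s:ℂ) * (A:ℂ)) with hδdef
  clear_value δ
  have hDnz : (1-q) * (s:ℂ) * (A:ℂ) ≠ 0 := mul_ne_zero (mul_ne_zero h1qnz hsnz) hAnz
  have hDE : (1-q) * (s:ℂ) * (A:ℂ) + E = (1-q) * (s:ℂ) * (A:ℂ) * (1 + δ) := by
    rw [hδdef, mul_add, mul_one, mul_div_cancel₀ E hDnz]
  have hDnorm : ‖(1-q) * (s:ℂ) * (A:ℂ)‖ = 2 * Real.sin θ * (s * A) := by
    rw [norm_mul, norm_mul, hq1]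
    simp only [Complex.norm_real, Real.norm_eq_abs, _root_.abs_of_pos hs0,
      _root_.abs_of_pos hA]
    ring
  have hδnorm : ‖δ‖ ≤ C₁ * s := by
    have h6 : 6 * Real.exp (3*K) * I₀ ≤ 2 * Real.sin θ * A * C₁ := by
      have hexp : 2 * Real.sin θ * A * C₁
          = 6 * Real.exp (3*K) * I₀ + 2 * Real.sin θ * A := by
        have h₁ : Real.sin θ ≠ 0 := hsin.ne'
        have h₂ : A ≠ 0 := hA.ne'
        rw [hC₁def]
        field_simp
        ring
      nlinarith [mul_pos hsin hA]
    rw [hδdef, norm_div, hDnorm, div_le_iff₀ (by positivity)]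
    calc ‖E‖ ≤ 6 * s^2 * Real.exp (3*K) * I₀ := hE
      _ = (6 * Real.exp (3*K) * I₀) * s^2 := by ring
      _ ≤ (2 * Real.sin θ * A * C₁) * s^2 := mul_le_mul_of_nonneg_right h6 (sq_nonneg s)
      _ = C₁ * s * (2 * Real.sin θ * (s * A)) := by ring
  have hδm : ‖δ‖ ≤ m := hδnorm.trans hsm
  have hδhalf : ‖δ‖ ≤ 1/2 := hδm.trans hmhalf
  have hδ4 : ‖δ‖ ≤ Real.pi * (1-α) / 4 := hδm.trans hm4
  have hre' : (1+δ).re = 1 + δ.re := by simp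
  have hre : (1:ℝ)/2 ≤ (1 + δ).re := by
    have h1 : |δ.re| ≤ ‖δ‖ := Complex.abs_re_le_norm δ
    rw [hre']
    have := neg_abs_le δ.re
    linarith
  have h1δnz : (1:ℂ) + δ ≠ 0 := by
    intro h
    rw [h] at hre
    simp at hre
    linarith
  set a : ℝ := (1 + δ).arg with hadef
  have haπ2 : |a| < Real.pi/2 :=
    Complex.abs_arg_lt_pi_div_two_iff.mpr (Or.inl (by linarith))
  have ha_eq : a = Real.arctan ((1+δ).im / (1+δ).re) := by
    have h := Complex.tan_arg (1+δ)
    rw [hadef, ← h, Real.arctan_tan (abs_lt.mp haπ2).1 (abs_lt.mp haπ2).2]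
  have ha_le : |a| ≤ 2 * ‖δ‖ := by
    rw [ha_eq]
    calc |Real.arctan ((1+δ).im / (1+δ).re)| ≤ |(1+δ).im / (1+δ).re| := abs_arctan_le_abs _
      _ = |(1+δ).im| / |(1+δ).re| := abs_div _ _
      _ ≤ ‖δ‖ / (1/2) := by
          apply div_le_div₀ (norm_nonneg δ) ?_ (by norm_num) ?_
          · have him : (1+δ).im = δ.im := by simp
            rw [him]
            exact Complex.abs_im_le_norm δ
          · rw [_root_.abs_of_pos (by linarith : (0:ℝ) < (1+δ).re)]
            exact hre
      _ = 2 * ‖δ‖ := by ring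
  set P : ℝ := Real.sin θ / Real.pi * (s * A / t) with hPdef
  have hP : 0 < P := mul_pos (div_pos hsin hπ) (div_pos (mul_pos hs0 hA) ht0)
  have hπc : (Real.pi:ℂ) ≠ 0 := Complex.ofReal_ne_zero.mpr hπ.ne'
  have hcfac : (2 * (Real.pi:ℂ) * I)⁻¹ * (1 - q)
      = (((Real.sin θ / Real.pi : ℝ)):ℂ) * Complex.exp (((-θ:ℝ):ℂ) * I) := by
    rw [hkey]
    push_cast
    field_simp
  have hzfact : GalphaPlus α t = (P:ℂ) * (Complex.exp (((-θ:ℝ):ℂ) * I) * (1 + δ)) := by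
    rw [hG, hDE]
    calc (2 * (Real.pi:ℂ) * I)⁻¹ * ((1-q) * (s:ℂ) * (A:ℂ) * (1 + δ) / (t:ℂ))
        = ((2 * (Real.pi:ℂ) * I)⁻¹ * (1 - q)) * ((s:ℂ) * (A:ℂ) * (1 + δ) / (t:ℂ)) := by
          ring
      _ = ((((Real.sin θ / Real.pi : ℝ)):ℂ) * Complex.exp (((-θ:ℝ):ℂ) * I)) *
          ((s:ℂ) * (A:ℂ) * (1 + δ) / (t:ℂ)) := by rw [hcfac]
      _ = (P:ℂ) * (Complex.exp (((-θ:ℝ):ℂ) * I) * (1 + δ)) := by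
          rw [hPdef]
          push_cast
          field_simp
  have habs1δ : 0 < ‖1+δ‖ := norm_pos_iff.mpr h1δnz
  have hargG : (GalphaPlus α t).arg = -θ + a := by
    have hfact2 : GalphaPlus α t =
        ((P * ‖1+δ‖ : ℝ):ℂ) *
          (Complex.cos (((-θ + a : ℝ)):ℂ) + Complex.sin (((-θ + a : ℝ)):ℂ) * I) := by
      rw [hzfact]
      conv_lhs => rw [← Complex.norm_mul_exp_arg_mul_I (1+δ)]
      rw [← hadef, ← Complex.exp_mul_I,
        show (((-θ + a : ℝ)):ℂ) * I = ((-θ:ℝ):ℂ) * I + ((a:ℝ):ℂ) * I by push_cast; ring,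
        Complex.exp_add]
      push_cast
      ring
    rw [hfact2]
    apply Complex.arg_mul_cos_add_sin_mul_I (mul_pos hP habs1δ)
    constructor
    · have h1 : -|a| ≤ a := neg_abs_le a
      have h2 : Real.pi * (1-α) / 2 < Real.pi * (1-α) := by nlinarith
      rw [hθdef]
      nlinarith
    · have h1 : a ≤ |a| := le_abs_self a
      linarith
  -- conclusion
  have hfinal : thetaFun α t - α = -a / Real.pi := by
    simp only [thetaFun, hargG, hθdef]
    field_simp
    ring
  rw [hfinal, abs_div, abs_neg, _root_.abs_of_pos hπ, div_le_iff₀ hπ]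
  calc |a| ≤ 2 * ‖δ‖ := ha_le
    _ ≤ 2 * (C₁ * s) := by linarith
    _ = 2 * C₁ / Real.pi * s * Real.pi := by
        field_simp
end

section
/- Let α, β ∈ (0,1) and ρ ∈ (0,1]. Let X and Y be independent real random variables on a probability space such that X is strictly α-stable with positivity parameter ρ, i.e. E[e^{iuX}] = exp(-|u|^α·e^{-iπα(2ρ-1)·sgn(u)/2}) for all u ∈ ℝ, and Y is a positive β-stable random variable, i.e. Y ≥ 0 almost surely and E[e^{-sY}] = exp(-s^β) for all s ≥ 0. Then X·Y^{1/α} is strictly (αβ)-stable with positivity parameter ρ, i.e. E[exp(iu·X·Y^{1/α})] = exp(-|u|^{αβ}·e^{-iπαβ(2ρ-1)·sgn(u)/2}) for all u ∈ ℝ. -/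
open MeasureTheory Complex Set Filter Topology

lemma laplace_ext {Ω : Type*} [MeasurableSpace Ω] (P : Measure Ω) [IsProbabilityMeasure P]
    (Y : Ω → ℝ) (hYm : Measurable Y) (hY0 : ∀ᵐ ω ∂P, 0 ≤ Y ω) (β : ℝ)
    (hY : ∀ s : ℝ, 0 ≤ s → ∫ ω, Real.exp (-(s * Y ω)) ∂P = Real.exp (-(s ^ β)))
    (z : ℂ) (hz : 0 < z.re) :
    ∫ ω, Complex.exp (-(z * (Y ω : ℂ))) ∂P = Complex.exp (-(z ^ (β:ℂ))) := by
  set f : ℂ → ℂ := fun w => ∫ ω, Complex.exp (-(w * (Y ω : ℂ))) ∂P with hf_def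
  set g : ℂ → ℂ := fun w => Complex.exp (-(w ^ (β:ℂ))) with hg_def
  set U : Set ℂ := {w : ℂ | 0 < w.re} with hU_def
  have hUopen : IsOpen U := isOpen_lt continuous_const Complex.continuous_re
  have hUconn : IsPreconnected U := (convex_halfSpace_re_gt 0).isPreconnected
  -- measurability of integrands
  have hmeas : ∀ w : ℂ, AEStronglyMeasurable (fun ω => Complex.exp (-(w * (Y ω : ℂ)))) P := by
    intro w
    exact (Complex.measurable_exp.comp ((measurable_const.mul
      (Complex.measurable_ofReal.comp hYm)).neg)).aestronglyMeasurable
  have hnorm : ∀ w : ℂ, ∀ ω : Ω, ‖Complex.exp (-(w * (Y ω : ℂ)))‖ = Real.exp (-(w.re * Y ω)) := by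
    intro w ω
    rw [Complex.norm_exp]
    congr 1
    simp
  have hint : ∀ w : ℂ, 0 ≤ w.re → Integrable (fun ω => Complex.exp (-(w * (Y ω : ℂ)))) P := by
    intro w hw
    refine (integrable_const (1:ℝ)).mono' (hmeas w) ?_
    filter_upwards [hY0] with ω hω
    rw [hnorm w ω]
    exact Real.exp_le_one_iff.2 (by nlinarith)
  -- analyticity of f
  have hf_diff : DifferentiableOn ℂ f U := by
    intro w hw
    have hwre : 0 < w.re := hw
    set a : ℝ := w.re / 2 with ha_def
    have ha : 0 < a := by positivity
    have key := hasDerivAt_integral_of_dominated_loc_of_deriv_le (μ := P)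
      (F := fun (x : ℂ) (ω : Ω) => Complex.exp (-(x * (Y ω : ℂ))))
      (F' := fun (x : ℂ) (ω : Ω) => -(Y ω : ℂ) * Complex.exp (-(x * (Y ω : ℂ))))
      (x₀ := w) (bound := fun _ => a⁻¹) (s := Metric.ball w a) (Metric.ball_mem_nhds w ha)
      (Filter.Eventually.of_forall fun x => hmeas x)
      (hint w hwre.le)
      (((Complex.measurable_ofReal.comp hYm).neg.mul
        (Complex.measurable_exp.comp ((measurable_const.mul
          (Complex.measurable_ofReal.comp hYm)).neg))).aestronglyMeasurable)
      ?_ (integrable_const _) ?_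
    · exact (key.2.differentiableAt).differentiableWithinAt
    · -- bound
      filter_upwards [hY0] with ω hω
      intro x hx
      have hxre : a ≤ x.re := by
        have h1 : |x.re - w.re| ≤ ‖x - w‖ := by
          simpa using Complex.abs_re_le_norm (x - w)
        have h2 : ‖x - w‖ < a := by simpa [Metric.mem_ball, dist_eq_norm] using hx
        have := abs_le.1 h1
        simp only [ha_def] at *
        linarith [this.1]
      rw [norm_mul, hnorm x ω]
      have h3 : ‖-(Y ω : ℂ)‖ = Y ω := by
        rw [norm_neg, Complex.norm_real, Real.norm_of_nonneg hω]
      rw [h3]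
      have h4 : Real.exp (-(x.re * Y ω)) ≤ Real.exp (-(a * Y ω)) := by
        apply Real.exp_le_exp.2
        nlinarith
      calc Y ω * Real.exp (-(x.re * Y ω)) ≤ Y ω * Real.exp (-(a * Y ω)) := by
            exact mul_le_mul_of_nonneg_left h4 hω
        _ ≤ a⁻¹ := by
            rw [Real.exp_neg, ← div_eq_mul_inv, div_le_iff₀ (Real.exp_pos _)]
            have h5 : a * Y ω ≤ Real.exp (a * Y ω) := by
              linarith [Real.add_one_le_exp (a * Y ω)]
            calc Y ω = a⁻¹ * (a * Y ω) := by field_simp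
              _ ≤ a⁻¹ * Real.exp (a * Y ω) := by
                  exact mul_le_mul_of_nonneg_left h5 (by positivity)
    · -- differentiability pointwise
      refine Filter.Eventually.of_forall fun ω => fun x _ => ?_
      have h1 : HasDerivAt (fun x : ℂ => -(x * (Y ω : ℂ))) (-(Y ω : ℂ)) x :=
        (hasDerivAt_mul_const _).neg
      have := h1.cexp
      rw [mul_comm]
      exact this
  have hg_diff : DifferentiableOn ℂ g U := by
    intro w hw
    apply DifferentiableAt.differentiableWithinAt
    apply DifferentiableAt.cexp
    apply DifferentiableAt.neg
    exact (differentiableAt_id.cpow (differentiableAt_const _)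
      (Or.inl (by exact hw)))
  have hf_an : AnalyticOnNhd ℂ f U := hf_diff.analyticOnNhd hUopen
  have hg_an : AnalyticOnNhd ℂ g U := hg_diff.analyticOnNhd hUopen
  -- agreement on reals > 0
  have h_eq : ∀ s : ℝ, 0 < s → f (s : ℂ) = g (s : ℂ) := by
    intro s hs
    have h2 : (fun ω => Complex.exp (-((s:ℂ) * (Y ω : ℂ)))) =
        (fun ω => ((Real.exp (-(s * Y ω)) : ℝ) : ℂ)) := by
      funext ω
      rw [Complex.ofReal_exp]
      push_cast
      ring_nf
    have h1 : f (s : ℂ) = ((∫ ω, Real.exp (-(s * Y ω)) ∂P : ℝ) : ℂ) := by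
      rw [hf_def]
      simp only
      rw [h2]
      exact integral_ofReal
    rw [h1, hY s hs.le, hg_def]
    simp only
    rw [← Complex.ofReal_cpow hs.le, ← Complex.ofReal_neg, Complex.ofReal_exp]
  have hfreq : ∃ᶠ w in 𝓝[≠] (1:ℂ), f w = g w := by
    have ht : Tendsto (fun n : ℕ => ((1 + ((n:ℝ)+1)⁻¹ : ℝ) : ℂ)) atTop (𝓝[≠] (1:ℂ)) := by
      rw [tendsto_nhdsWithin_iff]
      constructor
      · have : Tendsto (fun n : ℕ => (1 + ((n:ℝ)+1)⁻¹ : ℝ)) atTop (𝓝 1) := by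
          have := tendsto_one_div_add_atTop_nhds_zero_nat (𝕜 := ℝ)
          simpa [one_div] using (tendsto_const_nhds (x := (1:ℝ))).add this
        have := (Complex.continuous_ofReal.tendsto 1).comp this
        simpa [Function.comp_def] using this
      · refine Filter.Eventually.of_forall fun n => ?_
        simp only [Set.mem_compl_iff, Set.mem_singleton_iff]
        intro h
        have : (1 + ((n:ℝ)+1)⁻¹ : ℝ) = 1 := by exact_mod_cast h
        have hp : (0:ℝ) < ((n:ℝ)+1)⁻¹ := by positivity
        linarith
    exact ht.frequently (Filter.Frequently.of_forall fun n =>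
      h_eq _ (by positivity))
  have := hf_an.eqOn_of_preconnected_of_frequently_eq hg_an hUconn
    (show (1:ℂ) ∈ U by simp [hU_def]) hfreq
  exact this hz

/-- If `X` is strictly `α`-stable with positivity parameter `ρ`
and `Y` is an independent positive `β`-stable variable, then `X Y^{1/α}` is strictly
`αβ`-stable with positivity parameter `ρ`. -/
theorem stable_subordination (α β ρ : ℝ) (hα : α ∈ Set.Ioo (0:ℝ) 1)
    (hβ : β ∈ Set.Ioo (0:ℝ) 1) (hρ : ρ ∈ Set.Ioc (0:ℝ) 1)
    {Ω : Type*} [MeasurableSpace Ω] (P : MeasureTheory.Measure Ω)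
    [MeasureTheory.IsProbabilityMeasure P]
    (X Y : Ω → ℝ) (hXm : Measurable X) (hYm : Measurable Y)
    (hindep : ProbabilityTheory.IndepFun X Y P)
    (hX : ∀ u : ℝ, ∫ ω, Complex.exp ((u:ℂ) * (X ω : ℂ) * Complex.I) ∂P =
      Complex.exp (-((|u| ^ α : ℝ) : ℂ) *
        Complex.exp (-((Real.pi * α * (2 * ρ - 1) * Real.sign u / 2 : ℝ) : ℂ) * Complex.I)))
    (hY0 : ∀ᵐ ω ∂P, 0 ≤ Y ω)
    (hY : ∀ s : ℝ, 0 ≤ s → ∫ ω, Real.exp (-(s * Y ω)) ∂P = Real.exp (-(s ^ β))) :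
    ∀ u : ℝ, ∫ ω, Complex.exp ((u:ℂ) * ((X ω * Y ω ^ (1/α) : ℝ) : ℂ) * Complex.I) ∂P =
      Complex.exp (-((|u| ^ (α * β) : ℝ) : ℂ) *
        Complex.exp (-((Real.pi * (α * β) * (2 * ρ - 1) * Real.sign u / 2 : ℝ) : ℂ) * Complex.I)) := by
  obtain ⟨hα0, hα1⟩ := hα
  obtain ⟨hβ0, hβ1⟩ := hβ
  obtain ⟨hρ0, hρ1⟩ := hρ
  intro u
  by_cases hu : u = 0
  · subst hu
    rw [show |(0:ℝ)| ^ (α * β) = 0 by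
      rw [abs_zero, Real.zero_rpow (by positivity)]]
    simp [integral_const]
  -- setup
  set θ : ℝ := -(Real.pi * α * (2 * ρ - 1) * Real.sign u / 2) with hθ_def
  have hsign_abs : |Real.sign u| = 1 := by
    rcases lt_trichotomy u 0 with h | h | h
    · rw [Real.sign_of_neg h]; norm_num
    · exact absurd h hu
    · rw [Real.sign_of_pos h]; norm_num
  have hθ : |θ| < Real.pi / 2 := by
    have hπ := Real.pi_pos
    have h1 : |θ| = Real.pi * α * |2 * ρ - 1| * |Real.sign u| / 2 := by
      rw [hθ_def, abs_neg, abs_div, abs_mul, abs_mul]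
      rw [abs_of_pos (by positivity : (0:ℝ) < Real.pi * α)]
      norm_num
    rw [h1, hsign_abs, mul_one]
    have h2 : |2 * ρ - 1| ≤ 1 := by
      rw [abs_le]; constructor <;> nlinarith
    have h3 : Real.pi * α * |2 * ρ - 1| ≤ Real.pi * α := by
      have := mul_le_mul_of_nonneg_left h2 (show (0:ℝ) ≤ Real.pi * α by positivity)
      linarith
    have h4 : Real.pi * α < Real.pi := by nlinarith
    linarith
  set c : ℂ := Complex.exp ((θ : ℂ) * Complex.I) with hc_def
  have hc_eq : Complex.exp (-((Real.pi * α * (2 * ρ - 1) * Real.sign u / 2 : ℝ) : ℂ) * Complex.I)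
      = c := by
    rw [hc_def, hθ_def]
    push_cast
    ring_nf
  have hcre : c.re = Real.cos θ := Complex.exp_ofReal_mul_I_re θ
  have hcosθ : 0 < Real.cos θ := by
    apply Real.cos_pos_of_mem_Ioo
    rw [Set.mem_Ioo]
    have := abs_lt.1 hθ
    constructor <;> linarith [this.1, this.2]
  set r : ℝ := |u| ^ α with hr_def
  have hr : 0 < r := Real.rpow_pos_of_pos (abs_pos.2 hu) α
  set z : ℂ := (r : ℂ) * c with hz_def
  have hzre : 0 < z.re := by
    rw [hz_def, Complex.re_ofReal_mul, hcre]
    positivity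
  -- measures
  set μX := P.map X with hμX_def
  set μY := P.map Y with hμY_def
  have : IsProbabilityMeasure μX := Measure.isProbabilityMeasure_map hXm.aemeasurable
  have : IsProbabilityMeasure μY := Measure.isProbabilityMeasure_map hYm.aemeasurable
  have hmap : P.map (fun ω => (X ω, Y ω)) = μX.prod μY :=
    (ProbabilityTheory.indepFun_iff_map_prod_eq_prod_map_map hXm.aemeasurable
      hYm.aemeasurable).mp hindep
  set F : ℝ × ℝ → ℂ := fun p =>
    Complex.exp ((u:ℂ) * ((p.1 * p.2 ^ (1/α) : ℝ) : ℂ) * Complex.I) with hF_def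
  have hrpm : Measurable fun y : ℝ => y ^ (1/α) :=
    (Real.continuous_rpow_const (by positivity)).measurable
  have hFmeas : Measurable F := by
    apply Complex.measurable_exp.comp
    apply Measurable.mul _ measurable_const
    apply Measurable.mul measurable_const
    exact Complex.measurable_ofReal.comp (measurable_fst.mul (hrpm.comp measurable_snd))
  have hFnorm : ∀ p : ℝ × ℝ, ‖F p‖ = 1 := by
    intro p
    rw [hF_def]
    simp only
    rw [Complex.norm_exp]
    have : ((u:ℂ) * ((p.1 * p.2 ^ (1/α) : ℝ) : ℂ) * Complex.I).re = 0 := by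
      simp [Complex.mul_re, Complex.mul_im]
    rw [this, Real.exp_zero]
  have hFint : Integrable F (μX.prod μY) := by
    refine (integrable_const (1:ℝ)).mono' hFmeas.aestronglyMeasurable ?_
    exact Filter.Eventually.of_forall fun p => (hFnorm p).le
  -- Step A : Fubini
  have hA : ∫ ω, Complex.exp ((u:ℂ) * ((X ω * Y ω ^ (1/α) : ℝ) : ℂ) * Complex.I) ∂P
      = ∫ y, ∫ x, F (x, y) ∂μX ∂μY := by
    have h1 : ∫ ω, F (X ω, Y ω) ∂P = ∫ p, F p ∂(P.map (fun ω => (X ω, Y ω))) :=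
      (integral_map (hXm.prodMk hYm).aemeasurable hFmeas.aestronglyMeasurable).symm
    calc ∫ ω, Complex.exp ((u:ℂ) * ((X ω * Y ω ^ (1/α) : ℝ) : ℂ) * Complex.I) ∂P
        = ∫ ω, F (X ω, Y ω) ∂P := rfl
      _ = ∫ p, F p ∂(P.map (fun ω => (X ω, Y ω))) := h1
      _ = ∫ p, F p ∂(μX.prod μY) := by rw [hmap]
      _ = ∫ y, ∫ x, F (x, y) ∂μX ∂μY := integral_prod_symm F hFint
  -- Step B : inner integral via characteristic function
  have hB : ∀ y : ℝ, ∫ x, F (x, y) ∂μX =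
      Complex.exp (-((|u * y ^ (1/α)| ^ α : ℝ) : ℂ) *
        Complex.exp (-((Real.pi * α * (2 * ρ - 1) * Real.sign (u * y ^ (1/α)) / 2 : ℝ) : ℂ)
          * Complex.I)) := by
    intro y
    have h1 : ∫ x, F (x, y) ∂μX = ∫ ω, F (X ω, y) ∂P :=
      integral_map hXm.aemeasurable (hFmeas.comp (measurable_id.prodMk
        measurable_const)).aestronglyMeasurable
    rw [h1, ← hX (u * y ^ (1/α))]
    apply integral_congr_ae
    apply Filter.Eventually.of_forall
    intro ω
    rw [hF_def]
    simp only
    congr 1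
    push_cast
    ring
  -- Step C : a.e. identification with exp(-(z*y))
  have hY0' : ∀ᵐ y ∂μY, 0 ≤ y := by
    rw [hμY_def, ae_map_iff hYm.aemeasurable measurableSet_Ici]
    exact hY0
  have hC : ∀ y : ℝ, 0 ≤ y →
      Complex.exp (-((|u * y ^ (1/α)| ^ α : ℝ) : ℂ) *
        Complex.exp (-((Real.pi * α * (2 * ρ - 1) * Real.sign (u * y ^ (1/α)) / 2 : ℝ) : ℂ)
          * Complex.I)) = Complex.exp (-(z * (y : ℂ))) := by
    intro y hy
    rcases eq_or_lt_of_le hy with hy0 | hy0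
    · rw [← hy0]
      rw [Real.zero_rpow (by positivity : (1:ℝ)/α ≠ 0)]
      rw [mul_zero, abs_zero, Real.zero_rpow hα0.ne']
      norm_num
    · have hyp : 0 < y ^ (1/α) := Real.rpow_pos_of_pos hy0 _
      have h1 : |u * y ^ (1/α)| = |u| * y ^ (1/α) := by
        rw [abs_mul, abs_of_pos hyp]
      have h2 : |u * y ^ (1/α)| ^ α = r * y := by
        rw [h1, Real.mul_rpow (abs_nonneg u) hyp.le, hr_def]
        congr 1
        rw [← Real.rpow_mul hy0.le, one_div, inv_mul_cancel₀ hα0.ne', Real.rpow_one]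
      have h3 : Real.sign (u * y ^ (1/α)) = Real.sign u := by
        rcases lt_trichotomy u 0 with h | h | h
        · rw [Real.sign_of_neg h, Real.sign_of_neg (mul_neg_of_neg_of_pos h hyp)]
        · exact absurd h hu
        · rw [Real.sign_of_pos h, Real.sign_of_pos (mul_pos h hyp)]
      rw [h2, h3, hc_eq]
      congr 1
      rw [hz_def]
      push_cast
      ring
  -- Step D : Laplace transform
  have hD : ∫ y, Complex.exp (-(z * (y:ℂ))) ∂μY = Complex.exp (-(z ^ (β:ℂ))) := by
    have h1 : ∫ y, Complex.exp (-(z * (y:ℂ))) ∂μY = ∫ ω, Complex.exp (-(z * (Y ω : ℂ))) ∂P :=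
      integral_map hYm.aemeasurable (Complex.measurable_exp.comp ((measurable_const.mul
        Complex.measurable_ofReal).neg)).aestronglyMeasurable
    rw [h1]
    exact laplace_ext P Y hYm hY0 β hY z hzre
  -- Step E : compute z ^ β
  have hargz : z.arg = θ := by
    rw [hz_def, Complex.arg_real_mul _ hr, hc_def, Complex.exp_mul_I]
    apply Complex.arg_cos_add_sin_mul_I
    obtain ⟨h5, h6⟩ := abs_lt.1 hθ
    have hπ := Real.pi_pos
    rw [Set.mem_Ioc]
    have h7 : -Real.pi < -(Real.pi / 2) := by linarith
    exact ⟨h7.trans h5, h6.le.trans (by linarith)⟩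
  have habsz : ‖z‖ = r := by
    rw [hz_def, norm_mul, Complex.norm_real, Real.norm_of_nonneg hr.le, hc_def, Complex.norm_exp]
    have : ((θ:ℂ) * Complex.I).re = 0 := by simp
    rw [this, Real.exp_zero, mul_one]
  have hzne : z ≠ 0 := by
    intro h
    rw [h] at hzre
    simp at hzre
  have hlogz : Complex.log z = ((Real.log r : ℝ) : ℂ) + (θ : ℂ) * Complex.I := by
    rw [Complex.log, habsz, hargz]
  have hE : z ^ (β:ℂ) = ((|u| ^ (α * β) : ℝ) : ℂ) *
      Complex.exp (-((Real.pi * (α * β) * (2 * ρ - 1) * Real.sign u / 2 : ℝ) : ℂ) * Complex.I) := by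
    rw [Complex.cpow_def_of_ne_zero hzne, hlogz]
    rw [show (((Real.log r : ℝ) : ℂ) + (θ:ℂ) * Complex.I) * (β:ℂ)
        = ((β * Real.log r : ℝ) : ℂ) + ((β * θ : ℝ) : ℂ) * Complex.I by push_cast; ring]
    rw [Complex.exp_add]
    congr 1
    · rw [← Complex.ofReal_exp]
      congr 1
      rw [Real.rpow_mul (abs_nonneg u), ← hr_def, Real.rpow_def_of_pos hr]
      ring_nf
    · congr 1
      rw [hθ_def]
      push_cast
      ring
  rw [hA]
  have hcong : ∫ y, ∫ x, F (x, y) ∂μX ∂μY = ∫ y, Complex.exp (-(z * (y:ℂ))) ∂μY := by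
    apply integral_congr_ae
    filter_upwards [hY0'] with y hy
    rw [hB y, hC y hy]
  rw [hcong, hD, hE]
  congr 1
  ring
end
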